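/- arXiv:1302.5569 — 9 statements merged into one kernel-verified Lean document; each statement's English description precedes it below -/
import Mathlib

section
/- Let \mathfrak{g} be a finite-dimensional nilpotent Lie algebra over \mathbb{R} and let \theta be a nonzero closed 1-form on \mathfrak{g} (i.e. \theta \in \mathfrak{g}^* with d\theta = 0, where d is the Chevalley–Eilenberg differential). Then a 1-form \eta \in \mathfrak{g}^* satisfies d\eta - \eta \wedge \theta = 0 if and only if \eta is a real scalar multiple of \theta. -/
/-!
Pick `ξ` with `θ ξ = 1`. On `ker θ` the twisted equation reads `η ⁅ξ, X⁆ = η X`, and `ker θ` is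
`ad ξ`-stable because `θ` is closed, so `η X = η ((ad ξ)^k X)` for all `k`. Since `ad ξ` is
nilpotent, `η` vanishes on `ker θ`, hence is a multiple of `θ`.
-/

section

open LieAlgebra

variable {K L : Type*} [Field K] [LieRing L] [LieAlgebra K L]

lemma apply_ad_pow_eq_of_twisted_closed {θ η : L →ₗ[K] K} (hθ : ∀ X Y : L, θ ⁅X, Y⁆ = 0)
    (hη : ∀ X Y : L, η ⁅X, Y⁆ = η Y * θ X - η X * θ Y) {ξ : L} (hξ : θ ξ = 1) (k : ℕ) :
    ∀ X, θ X = 0 → η ((ad K L ξ ^ k) X) = η X := by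
  induction k with
  | zero => simp
  | succ k ih =>
    intro X hX
    rw [pow_succ, Module.End.mul_apply, ad_apply, ih _ (hθ ξ X), hη, hξ, hX]
    ring

lemma ker_le_ker_of_twisted_closed [LieRing.IsNilpotent L] {θ η : L →ₗ[K] K} (hθ0 : θ ≠ 0)
    (hθ : ∀ X Y : L, θ ⁅X, Y⁆ = 0) (hη : ∀ X Y : L, η ⁅X, Y⁆ = η Y * θ X - η X * θ Y) :
    LinearMap.ker θ ≤ LinearMap.ker η := by
  obtain ⟨ξ, hξ⟩ : ∃ ξ, θ ξ = 1 := by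
    obtain ⟨x, hx⟩ := DFunLike.ne_iff.mp hθ0
    exact ⟨(θ x)⁻¹ • x, by simp [inv_mul_cancel₀ hx]⟩
  obtain ⟨n, hn⟩ := LieModule.isNilpotent_toEnd_of_isNilpotent K L L ξ
  intro X hX
  have := apply_ad_pow_eq_of_twisted_closed hθ hη hξ n X hX
  rw [show ad K L ξ ^ n = 0 from hn, LinearMap.zero_apply, map_zero] at this
  exact this.symm

lemma exists_eq_smul_of_ker_le {V : Type*} [AddCommGroup V] [Module K V] {θ η : V →ₗ[K] K}
    (h : LinearMap.ker θ ≤ LinearMap.ker η) : ∃ c : K, η = c • θ := by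
  have := mem_span_of_iInf_ker_le_ker (L := fun _ : Unit => θ) (K := η) (by simpa using h)
  obtain ⟨c, hc⟩ := Submodule.mem_span_singleton.mp (by simpa using this)
  exact ⟨c, hc.symm⟩

end

theorem stmt0_general (g : Type*) [LieRing g] [LieAlgebra ℝ g]
    [LieRing.IsNilpotent g]
    (θ η : g →ₗ[ℝ] ℝ) (hθ0 : θ ≠ 0)
    (hθclosed : ∀ X Y : g, θ ⁅X, Y⁆ = 0) :
    (∀ X Y : g, -η ⁅X, Y⁆ - (η X * θ Y - η Y * θ X) = 0) ↔ ∃ c : ℝ, η = c • θ := by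
  constructor
  · intro h
    refine exists_eq_smul_of_ker_le (ker_le_ker_of_twisted_closed hθ0 hθclosed fun X Y => ?_)
    linarith [h X Y]
  · rintro ⟨c, rfl⟩ X Y
    simp only [LinearMap.smul_apply, smul_eq_mul, hθclosed X Y]
    ring

/-- On a finite-dimensional nilpotent real Lie algebra, for a nonzero closed 1-form `θ`,
a 1-form `η` solves `dη - η ∧ θ = 0` iff `η` is a scalar multiple of `θ`. -/
theorem stmt0 (g : Type*) [LieRing g] [LieAlgebra ℝ g] [Module.Finite ℝ g]
    [LieRing.IsNilpotent g]
    (θ η : g →ₗ[ℝ] ℝ) (hθ0 : θ ≠ 0)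
    (hθclosed : ∀ X Y : g, θ ⁅X, Y⁆ = 0) :
    (∀ X Y : g, -η ⁅X, Y⁆ - (η X * θ Y - η Y * θ X) = 0) ↔ ∃ c : ℝ, η = c • θ :=
  stmt0_general g θ η hθ0 hθclosed
end

section
/- Let \mathfrak{g} be a finite-dimensional real Lie algebra with an abelian complex structure J. Then the derived subalgebra [\mathfrak{g},\mathfrak{g}] is abelian; equivalently, \mathfrak{g} is 2-step solvable. -/
/-!
Complexify: `ℂ ⊗ 𝔤 = 𝔤^{1,0} + 𝔤^{0,1}`, and the condition `⁅J x, J y⁆ = ⁅x, y⁆` says exactly that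
both summands are abelian subalgebras. By Petravchuk's lemma a Lie ring that is a sum of two
abelian subsets is metabelian: decomposing `⁅b, c⁆` and `⁅a, d⁆` along the two summands, the
Jacobi identity expresses `⁅⁅a, b⁆, ⁅c, d⁆⁆` as `⁅r, q⁆ - ⁅r, q⁆`. Since `𝔤 ↪ ℂ ⊗ 𝔤` is an injective
Lie homomorphism, `𝔤` is metabelian as well.
-/

open TensorProduct

section Petravchuk

variable {L : Type*} [LieRing L] {A B : Set L}
  (hA : ∀ x ∈ A, ∀ y ∈ A, ⁅x, y⁆ = 0) (hB : ∀ x ∈ B, ∀ y ∈ B, ⁅x, y⁆ = 0)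
  (hAB : ∀ u, ∃ a ∈ A, ∃ b ∈ B, a + b = u)
include hA hB hAB

theorem lie_lie_eq_zero_of_mem_of_mem {a b c d : L} (ha : a ∈ A) (hb : b ∈ B) (hc : c ∈ A)
    (hd : d ∈ B) : ⁅⁅a, b⁆, ⁅c, d⁆⁆ = 0 := by
  obtain ⟨p, hp, q, hq, hbc⟩ := hAB ⁅b, c⁆
  obtain ⟨r, hr, s, hs, had⟩ := hAB ⁅a, d⁆
  have h₁ : ⁅⁅a, b⁆, c⁆ = ⁅a, q⁆ := by
    rw [lie_lie, hA a ha c hc, lie_zero, sub_zero, ← hbc, lie_add, hA a ha p hp, zero_add]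
  have h₂ : ⁅⁅a, b⁆, d⁆ = ⁅r, b⁆ := by
    rw [lie_lie, hB b hb d hd, lie_zero, zero_sub, ← had, lie_add, hB b hb s hs, add_zero,
      ← lie_skew, neg_neg]
  have h₃ : ⁅⁅a, q⁆, d⁆ = ⁅r, q⁆ := by
    rw [lie_lie, hB q hq d hd, lie_zero, zero_sub, ← had, lie_add, hB q hq s hs, add_zero,
      ← lie_skew, neg_neg]
  have h₄ : ⁅c, ⁅r, b⁆⁆ = -⁅r, q⁆ := by
    rw [leibniz_lie, hA c hc r hr, zero_lie, zero_add, ← lie_skew c b, lie_neg, ← hbc, lie_add,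
      hA r hr p hp, zero_add]
  calc ⁅⁅a, b⁆, ⁅c, d⁆⁆ = ⁅⁅⁅a, b⁆, c⁆, d⁆ + ⁅c, ⁅⁅a, b⁆, d⁆⁆ := leibniz_lie _ _ _
    _ = 0 := by rw [h₁, h₂, h₃, h₄, add_neg_cancel]

theorem exists_lie_eq_sub_lie (u v : L) :
    ∃ a ∈ A, ∃ b ∈ B, ∃ a' ∈ A, ∃ b' ∈ B, ⁅u, v⁆ = ⁅a, b'⁆ - ⁅a', b⁆ := by
  obtain ⟨a, ha, b, hb, rfl⟩ := hAB u
  obtain ⟨a', ha', b', hb', rfl⟩ := hAB v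
  refine ⟨a, ha, b, hb, a', ha', b', hb', ?_⟩
  rw [add_lie, lie_add, lie_add, hA a ha a' ha', hB b hb b' hb', ← lie_skew a' b]
  abel

theorem lie_lie_lie_eq_zero_of_forall_eq_add (x y z w : L) : ⁅⁅x, y⁆, ⁅z, w⁆⁆ = 0 := by
  obtain ⟨a, ha, b, hb, a', ha', b', hb', hxy⟩ := exists_lie_eq_sub_lie hA hB hAB x y
  obtain ⟨c, hc, d, hd, c', hc', d', hd', hzw⟩ := exists_lie_eq_sub_lie hA hB hAB z w
  rw [hxy, hzw, sub_lie, lie_sub, lie_sub,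
    lie_lie_eq_zero_of_mem_of_mem hA hB hAB ha hb' hc hd',
    lie_lie_eq_zero_of_mem_of_mem hA hB hAB ha hb' hc' hd,
    lie_lie_eq_zero_of_mem_of_mem hA hB hAB ha' hb hc hd',
    lie_lie_eq_zero_of_mem_of_mem hA hB hAB ha' hb hc' hd, sub_zero, sub_self]

end Petravchuk

open LieAlgebra.ExtendScalars Complex

section AbelianComplexStructure

variable {g : Type*} [LieRing g] [LieAlgebra ℝ g] {J : g →ₗ[ℝ] g}

/-- `x ↦ 1 ⊗ x + s ⊗ J x`; for `s = ∓ I` its range is `𝔤^{1,0}` resp. `𝔤^{0,1}`, the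
`±i`-eigenspace of the complex-linear extension of `J`. -/
noncomputable def eigenvectorMap (J : g →ₗ[ℝ] g) (s : ℂ) : g →ₗ[ℝ] ℂ ⊗[ℝ] g :=
  TensorProduct.mk ℝ ℂ g 1 + TensorProduct.mk ℝ ℂ g s ∘ₗ J

theorem eigenvectorMap_apply (s : ℂ) (x : g) :
    eigenvectorMap J s x = 1 ⊗ₜ x + s ⊗ₜ J x := rfl

variable (hJ2 : ∀ x, J (J x) = -x) (hab : ∀ x y, ⁅J x, J y⁆ = ⁅x, y⁆)
include hJ2 hab

omit hab in
theorem sup_range_eigenvectorMap_eq_top :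
    LinearMap.range (eigenvectorMap J I) ⊔ LinearMap.range (eigenvectorMap J (-I)) = ⊤ := by
  have one_tmul_mem (x : g) : (1 : ℂ) ⊗ₜ[ℝ] x ∈
      LinearMap.range (eigenvectorMap J I) ⊔ LinearMap.range (eigenvectorMap J (-I)) := by
    convert Submodule.add_mem_sup (LinearMap.mem_range_self _ ((1 / 2 : ℝ) • x))
      (LinearMap.mem_range_self _ ((1 / 2 : ℝ) • x)) using 1
    simp only [eigenvectorMap_apply, map_smul, neg_tmul]
    module
  have I_tmul_mem (x : g) : I ⊗ₜ[ℝ] x ∈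
      LinearMap.range (eigenvectorMap J I) ⊔ LinearMap.range (eigenvectorMap J (-I)) := by
    convert Submodule.add_mem_sup (LinearMap.mem_range_self _ ((- 1 / 2 : ℝ) • J x))
      (LinearMap.mem_range_self _ ((1 / 2 : ℝ) • J x)) using 1
    simp only [eigenvectorMap_apply, map_smul, neg_tmul, tmul_neg, hJ2]
    module
  rw [eq_top_iff, ← span_tmul_eq_top, Submodule.span_le]
  rintro - ⟨z, x, rfl⟩
  have : z ⊗ₜ[ℝ] x = z.re • ((1 : ℂ) ⊗ₜ[ℝ] x) + z.im • (I ⊗ₜ[ℝ] x) := by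
    rw [smul_tmul', smul_tmul', ← add_tmul]
    congr 1
    apply Complex.ext <;> simp
  rw [this]
  exact add_mem (Submodule.smul_mem _ _ (one_tmul_mem x)) (Submodule.smul_mem _ _ (I_tmul_mem x))

theorem lie_apply_right_eq_neg (x y : g) : ⁅x, J y⁆ = -⁅J x, y⁆ := by
  rw [← hab x (J y), hJ2, lie_neg]

theorem lie_eigenvectorMap_eq_zero {s : ℂ} (hs : s * s = -1) (x y : g) :
    ⁅eigenvectorMap J s x, eigenvectorMap J s y⁆ = 0 := by
  simp only [eigenvectorMap_apply, add_lie, lie_add, bracket_tmul, one_mul, mul_one, hs, hab,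
    lie_apply_right_eq_neg hJ2 hab x y, tmul_neg, neg_tmul]
  abel

theorem lie_lie_lie_eq_zero_of_abelian_complex_structure (x y z w : g) :
    ⁅⁅x, y⁆, ⁅z, w⁆⁆ = 0 := by
  have hℂ := lie_lie_lie_eq_zero_of_forall_eq_add (A := Set.range (eigenvectorMap J I))
    (B := Set.range (eigenvectorMap J (-I))) ?_ ?_ ?_ (1 ⊗ₜ x) (1 ⊗ₜ y) (1 ⊗ₜ z) (1 ⊗ₜ w)
  · simp only [bracket_tmul, one_mul] at hℂ
    exact (Module.FaithfullyFlat.one_tmul_eq_zero_iff ℝ g (A := ℂ) _).mp hℂ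
  · rintro - ⟨x, rfl⟩ - ⟨y, rfl⟩
    exact lie_eigenvectorMap_eq_zero hJ2 hab I_mul_I x y
  · rintro - ⟨x, rfl⟩ - ⟨y, rfl⟩
    exact lie_eigenvectorMap_eq_zero hJ2 hab (by simp) x y
  · intro u
    exact Submodule.mem_sup.mp (sup_range_eigenvectorMap_eq_top hJ2 ▸ Submodule.mem_top)

end AbelianComplexStructure

theorem LieAlgebra.lie_eq_zero_of_mem_derivedSeries_one {R L : Type*} [CommRing R] [LieRing L]
    [LieAlgebra R L] (h : ∀ x y z w : L, ⁅⁅x, y⁆, ⁅z, w⁆⁆ = 0) :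
    ∀ a ∈ derivedSeries R L 1, ∀ b ∈ derivedSeries R L 1, ⁅a, b⁆ = 0 := by
  have hspan :
      (derivedSeries R L 1).toSubmodule = Submodule.span R {m | ∃ x y : L, ⁅x, y⁆ = m} := by
    simp [derivedSeriesOfIdeal_succ, LieSubmodule.lieIdeal_oper_eq_linear_span']
  intro a ha b hb
  rw [← LieSubmodule.mem_toSubmodule, hspan] at ha hb
  induction ha, hb using Submodule.span_induction₂ with
  | mem_mem _ _ hx hy =>
    obtain ⟨x, y, rfl⟩ := hx
    obtain ⟨z, w, rfl⟩ := hy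
    exact h x y z w
  | zero_left => exact zero_lie _
  | zero_right => exact lie_zero _
  | add_left _ _ _ _ _ _ h₁ h₂ => rw [add_lie, h₁, h₂, add_zero]
  | add_right _ _ _ _ _ _ h₁ h₂ => rw [lie_add, h₁, h₂, add_zero]
  | smul_left _ _ _ _ _ h => rw [smul_lie, h, smul_zero]
  | smul_right _ _ _ _ _ h => rw [lie_smul, h, smul_zero]

theorem stmt1_general (g : Type*) [LieRing g] [LieAlgebra ℝ g]
    (J : g →ₗ[ℝ] g) (hJ2 : ∀ x : g, J (J x) = -x)
    (hab : ∀ X Y : g, ⁅J X, J Y⁆ = ⁅X, Y⁆) :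
    ∀ a ∈ LieAlgebra.derivedSeries ℝ g 1, ∀ b ∈ LieAlgebra.derivedSeries ℝ g 1,
      ⁅a, b⁆ = 0 :=
  LieAlgebra.lie_eq_zero_of_mem_derivedSeries_one
    (lie_lie_lie_eq_zero_of_abelian_complex_structure hJ2 hab)

/-- A Lie algebra with an abelian complex structure has abelian derived subalgebra. -/
theorem stmt1 (g : Type*) [LieRing g] [LieAlgebra ℝ g] [Module.Finite ℝ g]
    (J : g →ₗ[ℝ] g) (hJ2 : ∀ x : g, J (J x) = -x)
    (hab : ∀ X Y : g, ⁅J X, J Y⁆ = ⁅X, Y⁆) :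
    ∀ a ∈ LieAlgebra.derivedSeries ℝ g 1, ∀ b ∈ LieAlgebra.derivedSeries ℝ g 1,
      ⁅a, b⁆ = 0 :=
  stmt1_general g J hJ2 hab
end

section
/- Let \mathfrak{g} be a finite-dimensional real Lie algebra with an abelian complex structure J. Then J\mathfrak{g}^1 = \{JX : X \in [\mathfrak{g},\mathfrak{g}]\} is an abelian Lie subalgebra of \mathfrak{g}. -/
/-!
Complexify: `J` is abelian exactly when `𝔤^{1,0}` and `𝔤^{0,1}` are abelian subalgebras of
`𝔤_ℂ = 𝔤^{1,0} ⊕ 𝔤^{0,1}`, and a Lie algebra that is the sum of two abelian subalgebras is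
metabelian (Petravchuk). So `⁅𝔤¹, 𝔤¹⁆ = 0`, and since `⁅J u, J v⁆ = ⁅u, v⁆` the subspace `J 𝔤¹` is
abelian, hence trivially a subalgebra.

Over the reals the argument runs through `F := mixedBracket J`. The Jacobi identity gives `F` two
commutation rules, which make `F (F a b) (F c d)` invariant under reversing `a b c d`. Since
`F x y - F y x = 2 ⁅x, y⁆`, antisymmetrising in `a, b` and in `c, d` yields
`F ⁅a, b⁆ ⁅c, d⁆ = F ⁅c, d⁆ ⁅a, b⁆`, hence `⁅⁅a, b⁆, ⁅c, d⁆⁆ = 0`.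
-/

section

variable {R L : Type*} [CommRing R] [LieRing L] [LieAlgebra R L]

structure IsAbelianComplexStructure (J : L →ₗ[R] L) : Prop where
  apply_apply : ∀ x, J (J x) = -x
  lie_apply_apply : ∀ x y, ⁅J x, J y⁆ = ⁅x, y⁆

/-- Up to a factor, the real form of the `𝔤^{1,0}`-component of `⁅x - iJx, y + iJy⁆` in the
complexification. -/
def mixedBracket (J : L →ₗ[R] L) : L →ₗ[R] L →ₗ[R] L :=
  LinearMap.mk₂ R (fun x y => ⁅x, y⁆ + J ⁅x, J y⁆)
    (fun _ _ _ => by simp only [add_lie, map_add]; abel)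
    (fun _ _ _ => by simp only [smul_lie, map_smul, smul_add])
    (fun _ _ _ => by simp only [lie_add, map_add]; abel)
    (fun _ _ _ => by simp only [lie_smul, map_smul, smul_add])

@[simp]
lemma mixedBracket_apply (J : L →ₗ[R] L) (x y : L) :
    mixedBracket J x y = ⁅x, y⁆ + J ⁅x, J y⁆ := rfl

namespace IsAbelianComplexStructure

variable {J : L →ₗ[R] L}

lemma lie_apply (hJ : IsAbelianComplexStructure J) (x y : L) : ⁅x, J y⁆ = -⁅J x, y⁆ := by
  simpa [hJ.apply_apply] using (hJ.lie_apply_apply x (J y)).symm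

lemma apply_lie (hJ : IsAbelianComplexStructure J) (x y : L) : ⁅J x, y⁆ = -⁅x, J y⁆ := by
  rw [hJ.lie_apply, neg_neg]

lemma mixedBracket_sub_swap (hJ : IsAbelianComplexStructure J) (x y : L) :
    mixedBracket J x y - mixedBracket J y x = (2 : R) • ⁅x, y⁆ := by
  rw [mixedBracket_apply, mixedBracket_apply, hJ.lie_apply y, lie_skew, ← lie_skew x y, two_smul]
  abel

lemma mixedBracket_mixedBracket_apply (hJ : IsAbelianComplexStructure J) (x y z : L) :
    mixedBracket J (mixedBracket J x y) z =
      (⁅⁅x, y⁆, z⁆ - ⁅⁅x, J y⁆, J z⁆) + J (⁅⁅x, y⁆, J z⁆ + ⁅⁅x, J y⁆, z⁆) := by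
  simp only [mixedBracket_apply]
  simp only [add_lie, map_add, hJ.lie_apply_apply, hJ.apply_lie _ z]
  abel

lemma mixedBracket_apply_mixedBracket (hJ : IsAbelianComplexStructure J) (x y z : L) :
    mixedBracket J x (mixedBracket J y z) =
      (⁅x, ⁅y, z⁆⁆ - ⁅J x, ⁅y, J z⁆⁆) - J (⁅J x, ⁅y, z⁆⁆ + ⁅x, ⁅y, J z⁆⁆) := by
  simp only [mixedBracket_apply, map_add, hJ.apply_apply, hJ.lie_apply x, lie_neg, map_neg,
    ← hJ.lie_apply_apply x]
  abel

lemma mixedBracket_right_comm (hJ : IsAbelianComplexStructure J) (x y z : L) :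
    mixedBracket J (mixedBracket J x y) z = mixedBracket J (mixedBracket J x z) y := by
  have jacobi (y z : L) : ⁅⁅x, y⁆, z⁆ - ⁅⁅x, z⁆, y⁆ = ⁅x, ⁅y, z⁆⁆ := by
    rw [leibniz_lie, ← lie_skew ⁅x, z⁆ y]; abel
  rw [hJ.mixedBracket_mixedBracket_apply, hJ.mixedBracket_mixedBracket_apply]
  refine congrArg₂ (· + ·) ?_ (congrArg J ?_)
  · rw [sub_eq_sub_iff_sub_eq_sub, jacobi, jacobi, hJ.lie_apply_apply]
  · have h₁ := jacobi y (J z)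
    have h₂ := jacobi (J y) z
    rw [hJ.apply_lie y z, lie_neg] at h₂
    linear_combination (norm := abel) h₁ + h₂

lemma mixedBracket_outer_comm (hJ : IsAbelianComplexStructure J) (x y z : L) :
    mixedBracket J x (mixedBracket J y z) = mixedBracket J z (mixedBracket J y x) := by
  have jacobi (x z : L) : ⁅x, ⁅y, z⁆⁆ - ⁅z, ⁅y, x⁆⁆ = ⁅y, ⁅x, z⁆⁆ := by
    rw [leibniz_lie, ← lie_skew y x, lie_neg, ← lie_skew z ⁅x, y⁆]; abel
  rw [hJ.mixedBracket_apply_mixedBracket, hJ.mixedBracket_apply_mixedBracket]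
  refine congrArg₂ (· - ·) ?_ (congrArg J ?_)
  · rw [sub_eq_sub_iff_sub_eq_sub, jacobi, jacobi, hJ.lie_apply_apply]
  · have h₁ := jacobi (J x) z
    have h₂ := jacobi x (J z)
    rw [hJ.apply_lie x z, lie_neg] at h₁
    linear_combination (norm := abel) h₁ + h₂

lemma mixedBracket_mixedBracket_mixedBracket_reverse (hJ : IsAbelianComplexStructure J)
    (a b c d : L) :
    mixedBracket J (mixedBracket J a b) (mixedBracket J c d) =
      mixedBracket J (mixedBracket J d c) (mixedBracket J b a) :=
  calc mixedBracket J (mixedBracket J a b) (mixedBracket J c d)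
      = mixedBracket J (mixedBracket J a c) (mixedBracket J b d) := by
        rw [hJ.mixedBracket_outer_comm _ c d, hJ.mixedBracket_outer_comm c a b,
          hJ.mixedBracket_outer_comm d b]
    _ = mixedBracket J (mixedBracket J d c) (mixedBracket J b a) := by
        rw [hJ.mixedBracket_right_comm a c, hJ.mixedBracket_outer_comm a b d,
          hJ.mixedBracket_right_comm d]

lemma mixedBracket_lie_lie_comm (hJ : IsAbelianComplexStructure J) [Invertible (2 : R)]
    (a b c d : L) :
    mixedBracket J ⁅a, b⁆ ⁅c, d⁆ = mixedBracket J ⁅c, d⁆ ⁅a, b⁆ := by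
  have h4 : IsUnit ((2 : R) * 2) := (isUnit_of_invertible _).mul (isUnit_of_invertible _)
  have hscale (x y : L) : ((2 : R) * 2) • mixedBracket J x y =
      mixedBracket J ((2 : R) • x) ((2 : R) • y) := by
    rw [map_smul, map_smul, LinearMap.smul_apply, mul_smul]
  refine h4.smul_left_cancel.mp ?_
  rw [hscale, hscale, ← hJ.mixedBracket_sub_swap, ← hJ.mixedBracket_sub_swap]
  simp only [map_sub, LinearMap.sub_apply]
  rw [hJ.mixedBracket_mixedBracket_mixedBracket_reverse a b c d,
    hJ.mixedBracket_mixedBracket_mixedBracket_reverse a b d c,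
    hJ.mixedBracket_mixedBracket_mixedBracket_reverse b a c d,
    hJ.mixedBracket_mixedBracket_mixedBracket_reverse b a d c]
  abel

lemma lie_lie_lie_eq_zero (hJ : IsAbelianComplexStructure J) [Invertible (2 : R)]
    (a b c d : L) : ⁅⁅a, b⁆, ⁅c, d⁆⁆ = 0 := by
  refine (isUnit_of_invertible (2 : R)).smul_eq_zero.mp ?_
  rw [← hJ.mixedBracket_sub_swap, hJ.mixedBracket_lie_lie_comm, sub_self]

end IsAbelianComplexStructure

open LieAlgebra in
lemma lie_eq_zero_of_mem_derivedSeries_one (h : ∀ a b c d : L, ⁅⁅a, b⁆, ⁅c, d⁆⁆ = 0) {u v : L}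
    (hu : u ∈ derivedSeries R L 1) (hv : v ∈ derivedSeries R L 1) : ⁅u, v⁆ = 0 := by
  let D : Submodule R L := derivedSeries R L 1
  let bracket : L →ₗ[R] L →ₗ[R] L := LieModule.toEnd R L L
  have hbot : Submodule.map₂ bracket D D = ⊥ := by
    simp only [D]
    rw [coe_derivedSeries_one_eq, Submodule.map₂_span_span, Submodule.span_eq_bot]
    rintro _ ⟨_, ⟨a, b, rfl⟩, _, ⟨c, d, rfl⟩, rfl⟩
    exact h a b c d
  have huv := Submodule.apply_mem_map₂ bracket (p := D) (q := D) hu hv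
  rw [hbot, Submodule.mem_bot] at huv
  simpa only [bracket, LieHom.coe_toLinearMap, LieModule.toEnd_apply_apply] using huv

end

theorem stmt4_general (g : Type*) [LieRing g] [LieAlgebra ℝ g]
    (J : g →ₗ[ℝ] g) (hJ2 : ∀ x : g, J (J x) = -x)
    (hab : ∀ X Y : g, ⁅J X, J Y⁆ = ⁅X, Y⁆) :
    ∃ S : LieSubalgebra ℝ g,
      (S : Set g) = J '' ((LieAlgebra.derivedSeries ℝ g 1 : LieIdeal ℝ g) : Set g) ∧
      ∀ a ∈ S, ∀ b ∈ S, ⁅a, b⁆ = 0 := by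
  have hJ : IsAbelianComplexStructure J := ⟨hJ2, hab⟩
  have hJD : ∀ u ∈ LieAlgebra.derivedSeries ℝ g 1, ∀ v ∈ LieAlgebra.derivedSeries ℝ g 1,
      ⁅J u, J v⁆ = 0 := fun u hu v hv =>
    (hab u v).trans (lie_eq_zero_of_mem_derivedSeries_one hJ.lie_lie_lie_eq_zero hu hv)
  refine ⟨{ toSubmodule := (LieAlgebra.derivedSeries ℝ g 1 : Submodule ℝ g).map J
            lie_mem' := ?_ }, Submodule.map_coe _ _, ?_⟩
  · rintro _ _ ⟨u, hu, rfl⟩ ⟨v, hv, rfl⟩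
    rw [hJD u hu v hv]
    exact Submodule.zero_mem _
  · rintro _ ⟨u, hu, rfl⟩ _ ⟨v, hv, rfl⟩
    exact hJD u hu v hv

/-- For an abelian complex structure `J`, the image `J 𝔤¹` of the derived subalgebra
is an abelian Lie subalgebra. -/
theorem stmt4 (g : Type*) [LieRing g] [LieAlgebra ℝ g] [Module.Finite ℝ g]
    (J : g →ₗ[ℝ] g) (hJ2 : ∀ x : g, J (J x) = -x)
    (hab : ∀ X Y : g, ⁅J X, J Y⁆ = ⁅X, Y⁆) :
    ∃ S : LieSubalgebra ℝ g,
      (S : Set g) = J '' ((LieAlgebra.derivedSeries ℝ g 1 : LieIdeal ℝ g) : Set g) ∧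
      ∀ a ∈ S, ∀ b ∈ S, ⁅a, b⁆ = 0 :=
  stmt4_general g J hJ2 hab
end

section
/- Let \mathfrak{g} be a finite-dimensional real Lie algebra with an abelian complex structure J, and let \mathfrak{g}^1 = [\mathfrak{g},\mathfrak{g}]. Then \mathfrak{g}^1 \cap J\mathfrak{g}^1 is contained in the center of the subalgebra \mathfrak{g}^1 + J\mathfrak{g}^1. -/
/-!
Complexify: in `ℂ ⊗ 𝔤` the eigenspaces `𝔤^{1,0} = {u - iJu}` and `𝔤^{0,1} = {u + iJu}` of `J`
are abelian subalgebras because `J` is abelian, and together they span `ℂ ⊗ 𝔤`. A Lie ring that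
is the sum of two abelian subrings is metabelian (Petravchuk), so `𝔤¹` is abelian. Hence for
`x = Jy` with `y ∈ 𝔤¹`, `[x, a] = 0` as `x ∈ 𝔤¹`, and `[x, Jb] = [Jy, Jb] = [y, b] = 0`.
-/

open TensorProduct LieAlgebra Complex

namespace LieRing

variable {L : Type*} [LieRing L] {A B : AddSubgroup L}

theorem lie_lie_lie_eq_zero_of_mem (hA : ∀ a ∈ A, ∀ a' ∈ A, ⁅a, a'⁆ = 0)
    (hB : ∀ b ∈ B, ∀ b' ∈ B, ⁅b, b'⁆ = 0) (hAB : A ⊔ B = ⊤) {a b x y : L}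
    (ha : a ∈ A) (hb : b ∈ B) (hx : x ∈ A) (hy : y ∈ B) : ⁅⁅a, b⁆, ⁅x, y⁆⁆ = 0 := by
  -- Only the `B`-part of `[b, x]` and the `A`-part of `[a, y]` survive the Jacobi expansions,
  -- and they meet twice with opposite signs.
  obtain ⟨c₁, hc₁, c₂, hc₂, hc⟩ := AddSubgroup.mem_sup.1 (hAB ▸ AddSubgroup.mem_top ⁅b, x⁆)
  obtain ⟨d₁, hd₁, d₂, hd₂, hd⟩ := AddSubgroup.mem_sup.1 (hAB ▸ AddSubgroup.mem_top ⁅a, y⁆)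
  have hx' : ⁅⁅a, b⁆, x⁆ = ⁅a, c₂⁆ := by
    rw [lie_lie, hA a ha x hx, lie_zero, sub_zero, ← hc, lie_add, hA a ha c₁ hc₁, zero_add]
  have hy' : ⁅⁅a, b⁆, y⁆ = ⁅d₁, b⁆ := by
    rw [lie_lie, hB b hb y hy, lie_zero, zero_sub, ← hd, lie_add, hB b hb d₂ hd₂, add_zero,
      lie_skew]
  calc ⁅⁅a, b⁆, ⁅x, y⁆⁆ = ⁅⁅a, c₂⁆, y⁆ + ⁅x, ⁅d₁, b⁆⁆ := by rw [leibniz_lie, hx', hy']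
    _ = -⁅c₂, d₁⁆ + -⁅d₁, c₂⁆ := by
      congr 1
      · rw [lie_lie, hB c₂ hc₂ y hy, lie_zero, zero_sub, ← hd, lie_add, hB c₂ hc₂ d₂ hd₂,
          add_zero]
      · rw [leibniz_lie, hA x hx d₁ hd₁, zero_lie, zero_add, ← lie_skew x b, ← hc, lie_neg,
          lie_add, hA d₁ hd₁ c₁ hc₁, zero_add]
    _ = 0 := by rw [← lie_skew c₂ d₁, neg_neg, add_neg_cancel]

theorem exists_lie_eq_lie_sub_lie (hA : ∀ a ∈ A, ∀ a' ∈ A, ⁅a, a'⁆ = 0)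
    (hB : ∀ b ∈ B, ∀ b' ∈ B, ⁅b, b'⁆ = 0) (hAB : A ⊔ B = ⊤) (z w : L) :
    ∃ a ∈ A, ∃ b ∈ B, ∃ a' ∈ A, ∃ b' ∈ B, ⁅z, w⁆ = ⁅a, b⁆ - ⁅a', b'⁆ := by
  obtain ⟨a, ha, b, hb, rfl⟩ := AddSubgroup.mem_sup.1 (hAB ▸ AddSubgroup.mem_top z)
  obtain ⟨a', ha', b', hb', rfl⟩ := AddSubgroup.mem_sup.1 (hAB ▸ AddSubgroup.mem_top w)
  refine ⟨a, ha, b', hb', a', ha', b, hb, ?_⟩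
  rw [add_lie, lie_add, lie_add, hA a ha a' ha', hB b hb b' hb', ← lie_skew a' b]
  abel

theorem lie_lie_lie_eq_zero_of_sup_eq_top (hA : ∀ a ∈ A, ∀ a' ∈ A, ⁅a, a'⁆ = 0)
    (hB : ∀ b ∈ B, ∀ b' ∈ B, ⁅b, b'⁆ = 0) (hAB : A ⊔ B = ⊤) (p q r t : L) :
    ⁅⁅p, q⁆, ⁅r, t⁆⁆ = 0 := by
  obtain ⟨a, ha, b, hb, a', ha', b', hb', hpq⟩ := exists_lie_eq_lie_sub_lie hA hB hAB p q
  obtain ⟨x, hx, y, hy, x', hx', y', hy', hrt⟩ := exists_lie_eq_lie_sub_lie hA hB hAB r t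
  simp only [hpq, hrt, sub_lie, lie_sub, lie_lie_lie_eq_zero_of_mem hA hB hAB, ha, hb, ha', hb', hx,
    hy, hx', hy', sub_zero]

end LieRing

namespace LieAlgebra

variable {R L : Type*} [CommRing R] [LieRing L] [LieAlgebra R L]

theorem mem_of_mem_derivedSeries_one {N : Submodule R L} (h : ∀ x y : L, ⁅x, y⁆ ∈ N) {z : L}
    (hz : z ∈ derivedSeries R L 1) : z ∈ N := by
  rw [← LieSubmodule.mem_toSubmodule, derivedSeries_def, derivedSeriesOfIdeal_succ,
    derivedSeriesOfIdeal_zero, LieSubmodule.lieIdeal_oper_eq_linear_span'] at hz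
  refine Submodule.span_le.2 ?_ hz
  rintro _ ⟨x, -, y, -, rfl⟩
  exact h x y

theorem lie_eq_zero_of_mem_derivedSeries_one_s5 (h : ∀ p q r t : L, ⁅⁅p, q⁆, ⁅r, t⁆⁆ = 0) {x y : L}
    (hx : x ∈ derivedSeries R L 1) (hy : y ∈ derivedSeries R L 1) : ⁅x, y⁆ = 0 := by
  have hy' (p q : L) : ⁅⁅p, q⁆, y⁆ = 0 :=
    mem_of_mem_derivedSeries_one (N := LinearMap.ker (LieModule.toEnd R L L ⁅p, q⁆)) (h p q) hy
  rw [← lie_skew, neg_eq_zero]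
  refine mem_of_mem_derivedSeries_one (N := LinearMap.ker (LieModule.toEnd R L L y))
    (fun p q => ?_) hx
  rw [LinearMap.mem_ker, LieModule.toEnd_apply_apply, ← lie_skew, hy', neg_zero]

end LieAlgebra

namespace LinearMap

variable {g : Type*} [LieRing g] [LieAlgebra ℝ g] (J : g →ₗ[ℝ] g)

/-- For `w = ∓i` the range is the `±i`-eigenspace `𝔤^{1,0}`, resp. `𝔤^{0,1}`, of `J` on `ℂ ⊗ 𝔤`. -/
noncomputable def eigenMap (w : ℂ) : g →ₗ[ℝ] ℂ ⊗[ℝ] g :=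
  TensorProduct.mk ℝ ℂ g 1 + TensorProduct.mk ℝ ℂ g w ∘ₗ J

@[simp] theorem eigenMap_apply (w : ℂ) (u : g) : J.eigenMap w u = 1 ⊗ₜ u + w ⊗ₜ J u := rfl

variable {J}

theorem lie_apply_eq_neg_lie_apply (hJ2 : ∀ x : g, J (J x) = -x)
    (hab : ∀ X Y : g, ⁅J X, J Y⁆ = ⁅X, Y⁆) (u v : g) : ⁅J u, v⁆ = -⁅u, J v⁆ := by
  rw [← hab, hJ2, neg_lie]

theorem lie_eigenMap_eigenMap (hJ2 : ∀ x : g, J (J x) = -x)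
    (hab : ∀ X Y : g, ⁅J X, J Y⁆ = ⁅X, Y⁆) {w : ℂ} (hw : w * w = -1) (u v : g) :
    ⁅J.eigenMap w u, J.eigenMap w v⁆ = 0 := by
  simp only [eigenMap_apply, add_lie, lie_add, ExtendScalars.bracket_tmul, one_mul, mul_one, hw,
    hab, lie_apply_eq_neg_lie_apply hJ2 hab u v, tmul_neg, neg_tmul]
  abel

theorem range_eigenMap_sup_eq_top (hJ2 : ∀ x : g, J (J x) = -x) :
    range (J.eigenMap (-I)) ⊔ range (J.eigenMap I) = ⊤ := by
  have h1 (x : g) : (1 : ℂ) ⊗ₜ x ∈ range (J.eigenMap (-I)) ⊔ range (J.eigenMap I) := by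
    convert Submodule.add_mem_sup (mem_range_self _ ((2⁻¹ : ℝ) • x))
      (mem_range_self _ ((2⁻¹ : ℝ) • x)) using 1
    simp only [eigenMap_apply, map_smul, neg_tmul]
    module
  have hI (x : g) : I ⊗ₜ x ∈ range (J.eigenMap (-I)) ⊔ range (J.eigenMap I) := by
    convert Submodule.add_mem_sup (mem_range_self _ ((2⁻¹ : ℝ) • J x))
      (mem_range_self _ (-(2⁻¹ : ℝ) • J x)) using 1
    simp only [eigenMap_apply, map_smul, hJ2, tmul_neg, neg_tmul]
    module
  rw [eq_top_iff, ← span_tmul_eq_top, Submodule.span_le]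
  rintro _ ⟨c, x, rfl⟩
  have hc : c = c.re • (1 : ℂ) + c.im • I := by simp
  rw [hc, add_tmul, ← smul_tmul', ← smul_tmul']
  exact Submodule.add_mem _ (Submodule.smul_mem _ _ (h1 x)) (Submodule.smul_mem _ _ (hI x))

theorem lie_lie_lie_eq_zero (hJ2 : ∀ x : g, J (J x) = -x)
    (hab : ∀ X Y : g, ⁅J X, J Y⁆ = ⁅X, Y⁆) (p q r t : g) : ⁅⁅p, q⁆, ⁅r, t⁆⁆ = 0 := by
  have habelian {w : ℂ} (hw : w * w = -1) :
      ∀ z ∈ (range (J.eigenMap w)).toAddSubgroup, ∀ z' ∈ (range (J.eigenMap w)).toAddSubgroup,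
        ⁅z, z'⁆ = 0 := by
    rintro _ ⟨u, rfl⟩ _ ⟨v, rfl⟩
    exact lie_eigenMap_eigenMap hJ2 hab hw u v
  have hC := LieRing.lie_lie_lie_eq_zero_of_sup_eq_top (habelian (w := -I) (by simp))
    (habelian I_mul_I) (by rw [← Submodule.sup_toAddSubgroup, range_eigenMap_sup_eq_top hJ2,
      Submodule.top_toAddSubgroup]) ((1 : ℂ) ⊗ₜ p) (1 ⊗ₜ q) (1 ⊗ₜ r) (1 ⊗ₜ t)
  simpa only [ExtendScalars.bracket_tmul, one_mul, Module.FaithfullyFlat.one_tmul_eq_zero_iff]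
    using hC

end LinearMap

theorem stmt5_general (g : Type*) [LieRing g] [LieAlgebra ℝ g]
    (J : g →ₗ[ℝ] g) (hJ2 : ∀ x : g, J (J x) = -x)
    (hab : ∀ X Y : g, ⁅J X, J Y⁆ = ⁅X, Y⁆) :
    ∀ x : g, x ∈ LieAlgebra.derivedSeries ℝ g 1 →
      (∃ y ∈ LieAlgebra.derivedSeries ℝ g 1, x = J y) →
      ∀ a ∈ LieAlgebra.derivedSeries ℝ g 1, ∀ b ∈ LieAlgebra.derivedSeries ℝ g 1,
        ⁅x, a + J b⁆ = 0 := by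
  have hcomm {u v : g} (hu : u ∈ derivedSeries ℝ g 1) (hv : v ∈ derivedSeries ℝ g 1) :
      ⁅u, v⁆ = 0 :=
    lie_eq_zero_of_mem_derivedSeries_one_s5 (LinearMap.lie_lie_lie_eq_zero hJ2 hab) hu hv
  rintro x hx ⟨y, hy, rfl⟩ a ha b hb
  rw [lie_add, hcomm hx ha, hab, hcomm hy hb, add_zero]

/-- For an abelian complex structure, `𝔤¹ ∩ J𝔤¹` is contained in the center of
the subalgebra `𝔤¹ + J𝔤¹`. -/
theorem stmt5 (g : Type*) [LieRing g] [LieAlgebra ℝ g] [Module.Finite ℝ g]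
    (J : g →ₗ[ℝ] g) (hJ2 : ∀ x : g, J (J x) = -x)
    (hab : ∀ X Y : g, ⁅J X, J Y⁆ = ⁅X, Y⁆) :
    ∀ x : g, x ∈ LieAlgebra.derivedSeries ℝ g 1 →
      (∃ y ∈ LieAlgebra.derivedSeries ℝ g 1, x = J y) →
      ∀ a ∈ LieAlgebra.derivedSeries ℝ g 1, ∀ b ∈ LieAlgebra.derivedSeries ℝ g 1,
        ⁅x, a + J b⁆ = 0 :=
  stmt5_general g J hJ2 hab
end

section
/- Let (\mathcal{A}, \cdot) be a finite-dimensional commutative associative algebra over \mathbb{R} (not necessarily unital). Define the affine Lie algebra aff(\mathcal{A}) = \mathcal{A} \oplus \mathcal{A} with bracket [(x,y),(x',y')] = (0, x \cdot y' - x' \cdot y). Then aff(\mathcal{A}) is a Lie algebra, and it is nilpotent if and only if \mathcal{A} is nilpotent as an associative algebra. -/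
/-!
In the lower central series `C⁰ = aff(A)`, `Cᵏ⁺¹ = ⁅aff(A), Cᵏ⁆`, the brackets
`⁅(x, 0), (0, y)⁆ = (0, x * y)` put `(0, a * x₁ * ⋯ * xₖ)` into `Cᵏ`, while bracketing kills the
first coordinate and multiplies the second by one more factor, so `Cᵏ⁺¹ ⊆ 0 × Aᵏ⁺¹`. Hence
`aff(A)` is nilpotent exactly when some power of `A` vanishes.
-/

namespace Aff

variable {A : Type*} [NonUnitalCommRing A]

@[reducible] def lieRing : LieRing (A × A) where
  bracket p q := (0, p.1 * q.2 - q.1 * p.2)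
  add_lie p q r := by
    refine Prod.ext (by simp) ?_
    simp only [Prod.fst_add, Prod.snd_add, add_mul, mul_add]
    abel
  lie_add p q r := by
    refine Prod.ext (by simp) ?_
    simp only [Prod.fst_add, Prod.snd_add, add_mul, mul_add]
    abel
  lie_self p := by simp
  leibniz_lie p q r := by
    refine Prod.ext (by simp) ?_
    simp [mul_sub, mul_left_comm]

attribute [local instance] lieRing

@[reducible] def lieAlgebra (R : Type*) [CommRing R] [Module R A] [SMulCommClass R A A]
    [IsScalarTower R A A] : LieAlgebra R (A × A) where
  lie_smul t p q := by
    refine Prod.ext (smul_zero t).symm ?_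
    change p.1 * (t • q.2) - (t • q.1) * p.2 = t • (p.1 * q.2 - q.1 * p.2)
    rw [mul_smul_comm, smul_mul_assoc, smul_sub]

lemma lie_def (p q : A × A) : ⁅p, q⁆ = (0, p.1 * q.2 - q.1 * p.2) := rfl

lemma lie_inl_inr (x y : A) : ⁅((x, 0) : A × A), ((0, y) : A × A)⁆ = (0, x * y) := by
  simp [lie_def]

variable (A) in
/-- `productSubgroup A m` is the power `A^(m+1)`: it is generated by the products of `m + 1`
elements, written `l.foldl (· * ·) a` with `l.length = m`. -/
def productSubgroup (m : ℕ) : AddSubgroup A :=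
  AddSubgroup.closure {z | ∃ (a : A) (l : List A), l.length = m ∧ l.foldl (· * ·) a = z}

lemma productSubgroup_zero : productSubgroup A 0 = ⊤ :=
  eq_top_iff.2 fun z _ => AddSubgroup.subset_closure ⟨z, [], rfl, rfl⟩

lemma productSubgroup_succ_le (m : ℕ) : productSubgroup A (m + 1) ≤ productSubgroup A m := by
  rw [productSubgroup, AddSubgroup.closure_le]
  rintro _ ⟨a, _ | ⟨b, l⟩, hl, rfl⟩
  · simp at hl
  · exact AddSubgroup.subset_closure ⟨a * b, l, by simpa using hl, rfl⟩

lemma mul_mem_productSubgroup_succ {m : ℕ} (x : A) {y : A} (hy : y ∈ productSubgroup A m) :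
    x * y ∈ productSubgroup A (m + 1) := by
  induction hy using AddSubgroup.closure_induction with
  | mem _ h =>
    obtain ⟨a, l, hl, rfl⟩ := h
    refine AddSubgroup.subset_closure ⟨a, l ++ [x], by simp [hl], ?_⟩
    simp [mul_comm]
  | zero => simp
  | add _ _ _ _ h₁ h₂ => simpa [mul_add] using add_mem h₁ h₂
  | neg _ _ h => simpa using neg_mem h

lemma productSubgroup_eq_bot {n : ℕ}
    (hn : ∀ (a : A) (l : List A), l.length = n → l.foldl (· * ·) a = 0) :
    productSubgroup A n = ⊥ := by
  rw [eq_bot_iff, productSubgroup, AddSubgroup.closure_le]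
  rintro _ ⟨a, l, hl, rfl⟩
  exact hn a l hl

variable (A) in
def zeroProdProductIdeal (m : ℕ) : LieIdeal ℤ (A × A) where
  carrier := {p | p.1 = 0 ∧ p.2 ∈ productSubgroup A m}
  add_mem' := fun ⟨hp₁, hp₂⟩ ⟨hq₁, hq₂⟩ => ⟨by simp [hp₁, hq₁], add_mem hp₂ hq₂⟩
  zero_mem' := ⟨rfl, zero_mem _⟩
  smul_mem' t _ := fun ⟨hp₁, hp₂⟩ => ⟨by simp [hp₁], zsmul_mem hp₂ t⟩
  lie_mem {x p} := fun ⟨hp₁, hp₂⟩ => by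
    refine ⟨rfl, ?_⟩
    simpa [lie_def, hp₁] using productSubgroup_succ_le m (mul_mem_productSubgroup_succ x.1 hp₂)

lemma lie_mem_zeroProdProductIdeal_succ {m : ℕ} (x : A × A) {p : A × A}
    (hp : p ∈ zeroProdProductIdeal A m) : ⁅x, p⁆ ∈ zeroProdProductIdeal A (m + 1) := by
  obtain ⟨hp₁, hp₂⟩ := hp
  refine ⟨rfl, ?_⟩
  simpa [lie_def, hp₁] using mul_mem_productSubgroup_succ x.1 hp₂

lemma zero_foldl_mem_lowerCentralSeries (a : A) (l : List A) :
    ((0 : A), l.foldl (· * ·) a) ∈ LieModule.lowerCentralSeries ℤ (A × A) (A × A) l.length := by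
  induction l using List.reverseRecOn with
  | nil => simp
  | append_singleton l x ih =>
    rw [List.length_append, List.length_singleton, LieModule.lowerCentralSeries_succ,
      List.foldl_concat, mul_comm, ← lie_inl_inr]
    exact LieSubmodule.lie_mem_lie (LieSubmodule.mem_top _) ih

lemma lowerCentralSeries_succ_le (m : ℕ) :
    LieModule.lowerCentralSeries ℤ (A × A) (A × A) (m + 1) ≤ zeroProdProductIdeal A m := by
  induction m with
  | zero =>
    rw [LieModule.lowerCentralSeries_succ, LieSubmodule.lie_le_iff]
    intro x _ p _
    exact ⟨rfl, productSubgroup_zero (A := A) ▸ AddSubgroup.mem_top _⟩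
  | succ m ih =>
    rw [LieModule.lowerCentralSeries_succ, LieSubmodule.lie_le_iff]
    exact fun x _ p hp => lie_mem_zeroProdProductIdeal_succ x (ih hp)

theorem isNilpotent_iff :
    LieRing.IsNilpotent (A × A) ↔
      ∃ n : ℕ, ∀ (a : A) (l : List A), l.length = n → l.foldl (· * ·) a = 0 := by
  rw [LieRing.IsNilpotent, LieModule.isNilpotent_iff ℤ]
  constructor
  · rintro ⟨k, hk⟩
    refine ⟨k, fun a l hl => ?_⟩
    have := zero_foldl_mem_lowerCentralSeries a l
    rw [hl, hk, LieSubmodule.mem_bot] at this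
    exact congrArg Prod.snd this
  · rintro ⟨n, hn⟩
    refine ⟨n + 1, eq_bot_iff.2 fun p hp => ?_⟩
    obtain ⟨hp₁, hp₂⟩ := lowerCentralSeries_succ_le n hp
    rw [productSubgroup_eq_bot hn] at hp₂
    exact Prod.ext hp₁ hp₂

end Aff

theorem stmt6_general (A : Type*) [NonUnitalCommRing A] [Module ℝ A]
    [SMulCommClass ℝ A A] [IsScalarTower ℝ A A] :
    ∃ (instLR : LieRing (A × A)) (instLA : @LieAlgebra ℝ (A × A) _ instLR),
      instLR.toAddCommGroup = Prod.instAddCommGroup ∧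
      HEq instLA.toModule (Prod.instModule : Module ℝ (A × A)) ∧
      (∀ p q : A × A, @Bracket.bracket (A × A) (A × A) instLR.toBracket p q
          = (0, p.1 * q.2 - q.1 * p.2)) ∧
      (@LieRing.IsNilpotent (A × A) instLR ↔
        ∃ n : ℕ, ∀ (a : A) (l : List A), l.length = n → l.foldl (· * ·) a = 0) :=
  ⟨Aff.lieRing, Aff.lieAlgebra ℝ, rfl, HEq.rfl, fun _ _ => rfl, Aff.isNilpotent_iff⟩

/-- For a finite-dimensional commutative (nonunital) associative real algebra `A`,
`aff(A) = A ⊕ A` with bracket `[(x,y),(x',y')] = (0, x⬝y' - x'⬝y)` is a Lie algebra,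
which is nilpotent iff `A` is nilpotent as an associative algebra. -/
theorem stmt6 (A : Type*) [NonUnitalCommRing A] [Module ℝ A]
    [SMulCommClass ℝ A A] [IsScalarTower ℝ A A] [Module.Finite ℝ A] :
    ∃ (instLR : LieRing (A × A)) (instLA : @LieAlgebra ℝ (A × A) _ instLR),
      instLR.toAddCommGroup = Prod.instAddCommGroup ∧
      HEq instLA.toModule (Prod.instModule : Module ℝ (A × A)) ∧
      (∀ p q : A × A, @Bracket.bracket (A × A) (A × A) instLR.toBracket p q
          = (0, p.1 * q.2 - q.1 * p.2)) ∧
      (@LieRing.IsNilpotent (A × A) instLR ↔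
        ∃ n : ℕ, ∀ (a : A) (l : List A), l.length = n → l.foldl (· * ·) a = 0) :=
  stmt6_general A
end

section
/- Let \mathfrak{g} be a finite-dimensional real Lie algebra with an abelian complex structure J such that the sum \mathfrak{h} = [\mathfrak{g},\mathfrak{g}] + J[\mathfrak{g},\mathfrak{g}] is an abelian ideal. Let \Omega be a closed 2-form on \mathfrak{g} (d\Omega = 0 in the Chevalley–Eilenberg complex). Then for all X \in \mathfrak{g} and all Y, Z \in \mathfrak{h}, one has \Omega([X,JY],JZ) = -\Omega([X,Y],Z). -/
/-! Since `𝔥` is abelian and `J`-invariant, closedness of `Ω` on triples `(X, Y, Z)` with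
`Y, Z ∈ 𝔥` says that `Ω([X, Y], Z)` is symmetric in `Y, Z`. Closedness on `(JX, Y, JZ)`,
together with `[X, JY] = -[JX, Y]` and `[JZ, JX] = [Z, X]`, then turns `Ω([X, JY], JZ)` into
`-Ω([X, Z], Y) = -Ω([X, Y], Z)`. -/

section ComplexStructure

variable {L : Type*} [LieRing L]

theorem lie_apply_eq_neg_apply_lie {J : L → L} (hJ2 : ∀ x, J (J x) = -x)
    (hab : ∀ X Y, ⁅J X, J Y⁆ = ⁅X, Y⁆) (X Y : L) : ⁅X, J Y⁆ = -⁅J X, Y⁆ := by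
  have h := hab (J X) Y
  rw [hJ2, neg_lie] at h
  exact neg_eq_iff_eq_neg.mp h

theorem exists_apply_eq_add_apply {R σ : Type*} [Ring R] [Module R L] [SetLike σ L]
    [NegMemClass σ L] {J : L →ₗ[R] L} (hJ2 : ∀ x, J (J x) = -x) {S : σ} {z : L}
    (hz : ∃ a ∈ S, ∃ b ∈ S, z = a + J b) : ∃ a ∈ S, ∃ b ∈ S, J z = a + J b := by
  obtain ⟨a, ha, b, hb, rfl⟩ := hz
  refine ⟨-b, neg_mem hb, a, ha, ?_⟩
  rw [map_add, hJ2]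
  abel

end ComplexStructure

section ClosedForm

variable {R L M : Type*} [CommRing R] [LieRing L] [LieAlgebra R L] [AddCommGroup M] [Module R M]
  {Ω : L →ₗ[R] L →ₗ[R] M}

theorem apply_lie_comm_of_lie_eq_zero
    (hclosed : ∀ X Y Z : L, Ω ⁅X, Y⁆ Z + Ω ⁅Y, Z⁆ X + Ω ⁅Z, X⁆ Y = 0)
    (X : L) {Y Z : L} (hYZ : ⁅Y, Z⁆ = 0) : Ω ⁅X, Y⁆ Z = Ω ⁅X, Z⁆ Y := by
  have h := hclosed X Y Z
  rw [hYZ, ← lie_skew Z X, map_zero, map_neg, LinearMap.zero_apply, LinearMap.neg_apply,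
    add_zero, add_neg_eq_zero] at h
  exact h

theorem apply_lie_apply_apply_eq_neg
    (hclosed : ∀ X Y Z : L, Ω ⁅X, Y⁆ Z + Ω ⁅Y, Z⁆ X + Ω ⁅Z, X⁆ Y = 0)
    {J : L → L} (hJ2 : ∀ x, J (J x) = -x) (hab : ∀ X Y, ⁅J X, J Y⁆ = ⁅X, Y⁆)
    (X : L) {Y Z : L} (hYZ : ⁅Y, Z⁆ = 0) (hYJZ : ⁅Y, J Z⁆ = 0) :
    Ω ⁅X, J Y⁆ (J Z) = -Ω ⁅X, Y⁆ Z := by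
  have h := hclosed (J X) Y (J Z)
  rw [hYJZ, hab, ← lie_skew Z X, map_zero, map_neg, LinearMap.zero_apply, LinearMap.neg_apply,
    add_zero, add_neg_eq_zero] at h
  rw [lie_apply_eq_neg_apply_lie hJ2 hab, map_neg, LinearMap.neg_apply, h,
    apply_lie_comm_of_lie_eq_zero hclosed X hYZ]

end ClosedForm

theorem stmt8_general (g : Type*) [LieRing g] [LieAlgebra ℝ g]
    (J : g →ₗ[ℝ] g) (hJ2 : ∀ x : g, J (J x) = -x)
    (hab : ∀ X Y : g, ⁅J X, J Y⁆ = ⁅X, Y⁆)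
    (inH : g → Prop)
    (hHdef : ∀ z : g, inH z ↔ ∃ a ∈ LieAlgebra.derivedSeries ℝ g 1,
      ∃ b ∈ LieAlgebra.derivedSeries ℝ g 1, z = a + J b)
    (habH : ∀ y z : g, inH y → inH z → ⁅y, z⁆ = 0)
    (Ω : g →ₗ[ℝ] g →ₗ[ℝ] ℝ)
    (hclosed : ∀ X Y Z : g, Ω ⁅X, Y⁆ Z + Ω ⁅Y, Z⁆ X + Ω ⁅Z, X⁆ Y = 0) :
    ∀ (X Y Z : g), inH Y → inH Z → Ω ⁅X, J Y⁆ (J Z) = -Ω ⁅X, Y⁆ Z := by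
  intro X Y Z hY hZ
  have hJZ : inH (J Z) := (hHdef _).2 (exists_apply_eq_add_apply hJ2 ((hHdef Z).1 hZ))
  exact apply_lie_apply_apply_eq_neg hclosed hJ2 hab X (habH Y Z hY hZ) (habH Y _ hY hJZ)

/-- If `J` is abelian and `𝔥 = 𝔤¹ + J𝔤¹` is an abelian ideal, then for any closed
2-form `Ω`, `Ω([X,JY],JZ) = -Ω([X,Y],Z)` for `Y, Z ∈ 𝔥`. -/
theorem stmt8 (g : Type*) [LieRing g] [LieAlgebra ℝ g] [Module.Finite ℝ g]
    (J : g →ₗ[ℝ] g) (hJ2 : ∀ x : g, J (J x) = -x)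
    (hab : ∀ X Y : g, ⁅J X, J Y⁆ = ⁅X, Y⁆)
    (inH : g → Prop)
    (hHdef : ∀ z : g, inH z ↔ ∃ a ∈ LieAlgebra.derivedSeries ℝ g 1,
      ∃ b ∈ LieAlgebra.derivedSeries ℝ g 1, z = a + J b)
    (habH : ∀ y z : g, inH y → inH z → ⁅y, z⁆ = 0)
    (hidH : ∀ x y : g, inH y → inH ⁅x, y⁆)
    (Ω : g →ₗ[ℝ] g →ₗ[ℝ] ℝ)
    (hskew : ∀ X Y : g, Ω X Y = -Ω Y X)
    (hclosed : ∀ X Y Z : g, Ω ⁅X, Y⁆ Z + Ω ⁅Y, Z⁆ X + Ω ⁅Z, X⁆ Y = 0) :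
    ∀ (X Y Z : g), inH Y → inH Z → Ω ⁅X, J Y⁆ (J Z) = -Ω ⁅X, Y⁆ Z :=
  stmt8_general g J hJ2 hab inH hHdef habH Ω hclosed
end

section
/- Let \mathfrak{g} be a finite-dimensional real Lie algebra, J an abelian complex structure on \mathfrak{g}, and \Omega a closed 2-form. Suppose \mathfrak{h} = [\mathfrak{g},\mathfrak{g}] + J[\mathfrak{g},\mathfrak{g}] is an abelian ideal. Then for every X \in \mathfrak{g} and Y \in \mathfrak{h}, \Omega([X,Y],[JX,Y]) = 0, and consequently \Omega([X,JY], J[X,JY]) = 0. -/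
/-!
Every bracket lies in `𝔥`, which is abelian, so `Y ∈ 𝔥` commutes with `[X, Y]`, `[JX, Y]` and
`[X, JX]`. Closedness of `Ω` on the triples `(X, Y, [JX, Y])` and `(JX, Y, [X, Y])`, combined
through the Jacobi identity, gives `2 Ω([X,Y],[JX,Y]) = 0`. For the second claim put
`A = [X, JY]`: closedness on `(X, JY, JA)` and `(JX, A, JY)`, together with `[JU, V] = -[U, JV]`
for an abelian complex structure, reduces `Ω(A, JA)` to `Ω(A, [X,Y]) = Ω([X,JY],[JX,JY])`, an
instance of the first claim.
-/

section AbelianComplexStructure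

variable {L : Type*} [LieRing L] [Module ℝ L] {J : L →ₗ[ℝ] L}

theorem lie_apply_left_eq_neg_lie_apply_right (hJ2 : ∀ x : L, J (J x) = -x)
    (hab : ∀ X Y : L, ⁅J X, J Y⁆ = ⁅X, Y⁆) (U V : L) : ⁅J U, V⁆ = -⁅U, J V⁆ := by
  rw [← hab U (J V), hJ2, lie_neg, neg_neg]

end AbelianComplexStructure

section ClosedForm

variable {L : Type*} [LieRing L] [Module ℝ L] {Ω : L →ₗ[ℝ] L →ₗ[ℝ] ℝ} {H : Set L}

theorem closedForm_apply_lie_lie_eq_zero (hskew : ∀ X Y : L, Ω X Y = -Ω Y X)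
    (hclosed : ∀ X Y Z : L, Ω ⁅X, Y⁆ Z + Ω ⁅Y, Z⁆ X + Ω ⁅Z, X⁆ Y = 0)
    (habH : ∀ y ∈ H, ∀ z ∈ H, ⁅y, z⁆ = 0) (hbrH : ∀ a b : L, ⁅a, b⁆ ∈ H)
    (X X' : L) {Y : L} (hY : Y ∈ H) : Ω ⁅X, Y⁆ ⁅X', Y⁆ = 0 := by
  have hcomm : ∀ a b : L, ⁅Y, ⁅a, b⁆⁆ = 0 := fun a b => habH Y hY _ (hbrH a b)
  have jacobi : ⁅⁅X', Y⁆, X⁆ = ⁅⁅X, Y⁆, X'⁆ := by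
    have h := leibniz_lie X X' Y
    rw [← lie_skew ⁅X, X'⁆ Y, hcomm, neg_zero, zero_add] at h
    rw [← lie_skew ⁅X', Y⁆ X, h, lie_skew]
  have e1 := hclosed X Y ⁅X', Y⁆
  have e2 := hclosed X' Y ⁅X, Y⁆
  rw [hcomm, jacobi] at e1
  rw [hcomm] at e2
  simp only [map_zero, LinearMap.zero_apply, add_zero] at e1 e2
  linarith [hskew ⁅X', Y⁆ ⁅X, Y⁆]

theorem closedForm_apply_lie_apply_lie_eq_zero (hskew : ∀ X Y : L, Ω X Y = -Ω Y X)
    (hclosed : ∀ X Y Z : L, Ω ⁅X, Y⁆ Z + Ω ⁅Y, Z⁆ X + Ω ⁅Z, X⁆ Y = 0)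
    {J : L →ₗ[ℝ] L} (hJ2 : ∀ x : L, J (J x) = -x) (hab : ∀ X Y : L, ⁅J X, J Y⁆ = ⁅X, Y⁆)
    (habH : ∀ y ∈ H, ∀ z ∈ H, ⁅y, z⁆ = 0) (hbrH : ∀ a b : L, ⁅a, b⁆ ∈ H)
    (hJH : ∀ y ∈ H, J y ∈ H) (X : L) {Y : L} (hY : Y ∈ H) :
    Ω ⁅X, J Y⁆ (J ⁅X, J Y⁆) = 0 := by
  set A := ⁅X, J Y⁆
  have hA : Ω A ⁅X, Y⁆ = 0 := by
    simpa only [hab] using closedForm_apply_lie_lie_eq_zero hskew hclosed habH hbrH X (J X)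
      (hJH Y hY)
  have hJA_X : ⁅J A, X⁆ = ⁅J X, A⁆ := by
    rw [lie_apply_left_eq_neg_lie_apply_right hJ2 hab, lie_skew]
  have hA_JY : ⁅A, J Y⁆ = 0 := by
    rw [← neg_neg ⁅A, J Y⁆, ← lie_apply_left_eq_neg_lie_apply_right hJ2 hab,
      habH _ (hJH _ (hbrH _ _)) Y hY, neg_zero]
  have e1 := hclosed X (J Y) (J A)
  have e2 := hclosed (J X) A (J Y)
  rw [hab, habH Y hY A (hbrH _ _), hJA_X] at e1
  rw [hA_JY, hab, ← lie_skew Y X] at e2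
  simp only [map_zero, LinearMap.zero_apply, add_zero, map_neg, LinearMap.neg_apply] at e1 e2
  linarith [hskew ⁅X, Y⁆ A]

end ClosedForm

theorem stmt9_general (g : Type*) [LieRing g] [LieAlgebra ℝ g]
    (J : g →ₗ[ℝ] g) (hJ2 : ∀ x : g, J (J x) = -x)
    (hab : ∀ X Y : g, ⁅J X, J Y⁆ = ⁅X, Y⁆)
    (inH : g → Prop)
    (hHdef : ∀ z : g, inH z ↔ ∃ a ∈ LieAlgebra.derivedSeries ℝ g 1,
      ∃ b ∈ LieAlgebra.derivedSeries ℝ g 1, z = a + J b)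
    (habH : ∀ y z : g, inH y → inH z → ⁅y, z⁆ = 0)
    (Ω : g →ₗ[ℝ] g →ₗ[ℝ] ℝ)
    (hskew : ∀ X Y : g, Ω X Y = -Ω Y X)
    (hclosed : ∀ X Y Z : g, Ω ⁅X, Y⁆ Z + Ω ⁅Y, Z⁆ X + Ω ⁅Z, X⁆ Y = 0) :
    ∀ (X Y : g), inH Y →
      Ω ⁅X, Y⁆ ⁅J X, Y⁆ = 0 ∧ Ω ⁅X, J Y⁆ (J ⁅X, J Y⁆) = 0 := by
  have habH' : ∀ y ∈ {z | inH z}, ∀ z ∈ {z | inH z}, ⁅y, z⁆ = 0 :=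
    fun y hy z hz => habH y z hy hz
  have hbrH : ∀ a b : g, inH ⁅a, b⁆ := fun a b =>
    (hHdef _).2 ⟨⁅a, b⁆, LieSubmodule.lie_mem_lie (LieSubmodule.mem_top a)
      (LieSubmodule.mem_top b), 0, zero_mem _, by rw [map_zero, add_zero]⟩
  have hJH : ∀ y, inH y → inH (J y) := by
    intro y hy
    obtain ⟨a, ha, b, hb, rfl⟩ := (hHdef y).1 hy
    exact (hHdef _).2 ⟨-b, neg_mem hb, a, ha, by rw [map_add, hJ2, add_comm]⟩
  intro X Y hY
  exact ⟨closedForm_apply_lie_lie_eq_zero hskew hclosed habH' hbrH X (J X) hY,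
    closedForm_apply_lie_apply_lie_eq_zero hskew hclosed hJ2 hab habH' hbrH hJH X hY⟩

/-- If `J` is abelian and `𝔥 = 𝔤¹ + J𝔤¹` is an abelian ideal, then for any closed
2-form `Ω`, `Ω([X,Y],[JX,Y]) = 0` and `Ω([X,JY], J[X,JY]) = 0` for `Y ∈ 𝔥`. -/
theorem stmt9 (g : Type*) [LieRing g] [LieAlgebra ℝ g] [Module.Finite ℝ g]
    (J : g →ₗ[ℝ] g) (hJ2 : ∀ x : g, J (J x) = -x)
    (hab : ∀ X Y : g, ⁅J X, J Y⁆ = ⁅X, Y⁆)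
    (inH : g → Prop)
    (hHdef : ∀ z : g, inH z ↔ ∃ a ∈ LieAlgebra.derivedSeries ℝ g 1,
      ∃ b ∈ LieAlgebra.derivedSeries ℝ g 1, z = a + J b)
    (habH : ∀ y z : g, inH y → inH z → ⁅y, z⁆ = 0)
    (hidH : ∀ x y : g, inH y → inH ⁅x, y⁆)
    (Ω : g →ₗ[ℝ] g →ₗ[ℝ] ℝ)
    (hskew : ∀ X Y : g, Ω X Y = -Ω Y X)
    (hclosed : ∀ X Y Z : g, Ω ⁅X, Y⁆ Z + Ω ⁅Y, Z⁆ X + Ω ⁅Z, X⁆ Y = 0) :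
    ∀ (X Y : g), inH Y →
      Ω ⁅X, Y⁆ ⁅J X, Y⁆ = 0 ∧ Ω ⁅X, J Y⁆ (J ⁅X, J Y⁆) = 0 :=
  stmt9_general g J hJ2 hab inH hHdef habH Ω hskew hclosed
end

section
/- Let \mathfrak{g} be a real Lie algebra that is an abelian double product with respect to an abelian complex structure J, i.e. \mathfrak{g} = \mathfrak{g}^1 \oplus J\mathfrak{g}^1 with \mathfrak{g}^1 = [\mathfrak{g},\mathfrak{g}] and both summands abelian subalgebras. Then the product X \cdot Y := [JX, Y] on \mathfrak{g}^1 is commutative and associative. -/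
/-! Commutativity of `X ⬝ Y = [JX, Y]` holds on all of `𝔤` and only needs `J` to be an abelian
complex structure: apply `[JX, JY] = [X, Y]` to `X` and `JY`. Associativity then reduces, by
commutativity, to `[Ja, [Jc, b]] = [Jc, [Ja, b]]`, which is the Jacobi identity together with
`[Ja, Jc] = 0`, i.e. the abelianness of `J𝔤¹`. -/

theorem lie_lie_comm_of_lie_eq_zero {L M : Type*} [LieRing L] [AddCommGroup M]
    [LieRingModule L M] {x y : L} (h : ⁅x, y⁆ = 0) (m : M) :
    ⁅x, ⁅y, m⁆⁆ = ⁅y, ⁅x, m⁆⁆ := by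
  rw [← sub_eq_zero, ← lie_lie, h, zero_lie]

theorem lie_apply_comm_of_abelian_complex {L : Type*} [LieRing L] (J : L → L)
    (hJ2 : ∀ x, J (J x) = -x) (hab : ∀ x y, ⁅J x, J y⁆ = ⁅x, y⁆) (x y : L) :
    ⁅J x, y⁆ = ⁅J y, x⁆ := by
  have h := hab x (J y)
  rw [hJ2, lie_neg, ← lie_skew x] at h
  exact neg_injective h

theorem stmt12_general (g : Type*) [LieRing g] [LieAlgebra ℝ g]
    (J : g →ₗ[ℝ] g) (hJ2 : ∀ x : g, J (J x) = -x)
    (hab : ∀ X Y : g, ⁅J X, J Y⁆ = ⁅X, Y⁆)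
    (habJD : ∀ a ∈ LieAlgebra.derivedSeries ℝ g 1,
      ∀ b ∈ LieAlgebra.derivedSeries ℝ g 1, ⁅J a, J b⁆ = 0) :
    ∀ a ∈ LieAlgebra.derivedSeries ℝ g 1, ∀ b ∈ LieAlgebra.derivedSeries ℝ g 1,
      ∀ c ∈ LieAlgebra.derivedSeries ℝ g 1,
        ⁅J a, b⁆ = ⁅J b, a⁆ ∧ ⁅J ⁅J a, b⁆, c⁆ = ⁅J a, ⁅J b, c⁆⁆ := by
  intro a ha b _ c hc
  have comm := lie_apply_comm_of_abelian_complex J hJ2 hab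
  refine ⟨comm a b, ?_⟩
  calc ⁅J ⁅J a, b⁆, c⁆ = ⁅J c, ⁅J a, b⁆⁆ := comm _ c
    _ = ⁅J a, ⁅J c, b⁆⁆ := lie_lie_comm_of_lie_eq_zero (habJD c hc a ha) b
    _ = ⁅J a, ⁅J b, c⁆⁆ := by rw [comm c b]

/-- If `𝔤 = 𝔤¹ ⊕ J𝔤¹` is an abelian double product for an abelian complex
structure `J`, then the product `X ⬝ Y = [JX, Y]` on `𝔤¹` is commutative and
associative. -/
theorem stmt12 (g : Type*) [LieRing g] [LieAlgebra ℝ g] [Module.Finite ℝ g]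
    (J : g →ₗ[ℝ] g) (hJ2 : ∀ x : g, J (J x) = -x)
    (hab : ∀ X Y : g, ⁅J X, J Y⁆ = ⁅X, Y⁆)
    (hsum : ∀ x : g, ∃ a ∈ LieAlgebra.derivedSeries ℝ g 1,
      ∃ b ∈ LieAlgebra.derivedSeries ℝ g 1, x = a + J b)
    (hdisj : ∀ a ∈ LieAlgebra.derivedSeries ℝ g 1,
      ∀ b ∈ LieAlgebra.derivedSeries ℝ g 1, a + J b = 0 → a = 0 ∧ b = 0)
    (habD : ∀ a ∈ LieAlgebra.derivedSeries ℝ g 1,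
      ∀ b ∈ LieAlgebra.derivedSeries ℝ g 1, ⁅a, b⁆ = 0)
    (habJD : ∀ a ∈ LieAlgebra.derivedSeries ℝ g 1,
      ∀ b ∈ LieAlgebra.derivedSeries ℝ g 1, ⁅J a, J b⁆ = 0) :
    ∀ a ∈ LieAlgebra.derivedSeries ℝ g 1, ∀ b ∈ LieAlgebra.derivedSeries ℝ g 1,
      ∀ c ∈ LieAlgebra.derivedSeries ℝ g 1,
        ⁅J a, b⁆ = ⁅J b, a⁆ ∧ ⁅J ⁅J a, b⁆, c⁆ = ⁅J a, ⁅J b, c⁆⁆ :=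
  stmt12_general g J hJ2 hab habJD
end

section
/- Let \mathfrak{h} and \mathfrak{g} be finite-dimensional real Lie algebras with \mathfrak{g} solvable, and let \rho: \mathfrak{g} \to Der(\mathfrak{h}) be a representation by derivations whose image is nilpotent in End(\mathfrak{h}), and which is not of type (I) (i.e. some \rho(X) has an eigenvalue with nonzero real part). Then there exists a complex-valued character \alpha of \mathfrak{g} with Re(\alpha) \neq 0 such that the generalized weight space V_\alpha(\mathfrak{h}_\mathbb{C}) = \{v \in \mathfrak{h}_\mathbb{C} : \rho_s(X)v = \alpha(X)v \text{ for all } X\} is nonzero and [V_\alpha(\mathfrak{h}_\mathbb{C}), V_{\bar\alpha}(\mathfrak{h}_\mathbb{C})] = 0. -/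
/-!
Complexify and decompose `𝔥_ℂ` into joint generalized eigenspaces `V_χ` of the operators
`ρ(X)_ℂ`; this is possible because nilpotency of `ρ(𝔤)` makes every generalized eigenspace of one
`ρ(X)_ℂ` invariant under all the others. On `V_χ` each `ρ_s(X)_ℂ` acts as the scalar `χ(X)`, and a
trace argument on `V_χ` shows that `χ` is a character. Since each `ρ(X)` is a derivation,
`[V_χ, V_χ'] ⊆ V_{χ+χ'}`. Fix `X₀` such that `ρ(X₀)` has an eigenvalue with nonzero real part and
choose a weight `α` maximizing `|Re α(X₀)|`. Then `α + ᾱ` takes the value `2 Re α(X₀)` at `X₀`,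
so it is not a weight and `[V_α, V_ᾱ] = 0`.
-/

open TensorProduct Module

attribute [local instance 100] LieRing.ofAssociativeRing

namespace Module.End

variable {R M : Type*} [CommRing R] [AddCommGroup M] [Module R M]

theorem map_mem_maxGenEigenspace_of_comp_eq {M' : Type*} [AddCommGroup M'] [Module R M']
    {f : End R M} {f' : End R M'} (φ : M →ₗ[R] M') (h : φ ∘ₗ f = f' ∘ₗ φ) {c : R} {m : M}
    (hm : m ∈ f.maxGenEigenspace c) : φ m ∈ f'.maxGenEigenspace c := by
  obtain ⟨k, hk⟩ := (mem_maxGenEigenspace f c m).mp hm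
  refine (mem_maxGenEigenspace f' c (φ m)).mpr ⟨k, ?_⟩
  have hc : (f' - c • 1) ∘ₗ φ = φ ∘ₗ (f - c • 1) := by
    ext x
    simpa using congr($h x).symm
  rw [← LinearMap.comp_apply, commute_pow_left_of_commute hc, LinearMap.comp_apply, hk, map_zero]

/-- By the Leibniz rule, `lift B` intertwines `f₁ ⊗ 1 + 1 ⊗ f₂` with `f`, and the two summands
commute. -/
theorem apply_mem_maxGenEigenspace_add_of_leibniz {M₁ M₂ : Type*} [AddCommGroup M₁] [Module R M₁]
    [AddCommGroup M₂] [Module R M₂] (B : M₁ →ₗ[R] M₂ →ₗ[R] M) {f₁ : End R M₁} {f₂ : End R M₂}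
    {f : End R M} (hB : ∀ m n, f (B m n) = B (f₁ m) n + B m (f₂ n)) {a b : R} {m : M₁} {n : M₂}
    (hm : m ∈ f₁.maxGenEigenspace a) (hn : n ∈ f₂.maxGenEigenspace b) :
    B m n ∈ f.maxGenEigenspace (a + b) := by
  have h₁ : m ⊗ₜ n ∈ maxGenEigenspace (f₁.rTensor M₂) a :=
    map_mem_maxGenEigenspace_of_comp_eq ((TensorProduct.mk R M₁ M₂).flip n) (by ext; simp) hm
  have h₂ : m ⊗ₜ n ∈ maxGenEigenspace (f₂.lTensor M₁) b :=
    map_mem_maxGenEigenspace_of_comp_eq (TensorProduct.mk R M₁ M₂ m) (by ext; simp) hn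
  have hcomm : Commute (f₁.rTensor M₂) (f₂.lTensor M₁) :=
    (LinearMap.rTensor_comp_lTensor _ _ _).trans (LinearMap.lTensor_comp_rTensor _ _ _).symm
  exact map_mem_maxGenEigenspace_of_comp_eq (TensorProduct.lift B)
    (TensorProduct.ext' fun m n => by simp [hB])
    (genEigenspace_inf_le_add _ _ a b ⊤ ⊤ hcomm ⟨h₁, h₂⟩)

theorem mapsTo_maxGenEigenspace_of_ad_pow_eq_zero {f g : End R M} {n : ℕ}
    (hfg : (LieAlgebra.ad R (End R M) f ^ n) g = 0) (c : R) :
    Set.MapsTo g (f.maxGenEigenspace c) (f.maxGenEigenspace c) := fun m hm => by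
  have hg : g ∈ (LieAlgebra.ad R (End R M) f).maxGenEigenspace 0 :=
    (mem_maxGenEigenspace _ _ _).mpr ⟨n, by simpa using hfg⟩
  simpa using apply_mem_maxGenEigenspace_add_of_leibniz LinearMap.id
    (fun (g : End R M) m => by simp [Ring.lie_def]) hg hm

theorem apply_eq_smul_iff_mem_maxGenEigenspace {f s : End R M} (hss : s.IsFinitelySemisimple)
    (hcomm : Commute f s) (hnil : IsNilpotent (f - s)) {c : R} {m : M} :
    s m = c • m ↔ m ∈ f.maxGenEigenspace c := by
  refine ⟨fun hm => ?_, fun hm =>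
    apply_eq_of_mem_of_comm_of_isFinitelySemisimple_of_isNil hm hcomm hss hnil⟩
  have hs : m ∈ s.maxGenEigenspace c := (mem_maxGenEigenspace _ _ _).mpr ⟨1, by simp [hm]⟩
  have hn : m ∈ (f - s).maxGenEigenspace 0 := by
    obtain ⟨k, hk⟩ := hnil
    exact (mem_maxGenEigenspace _ _ _).mpr ⟨k, by simp [hk]⟩
  have hsn : Commute s (f - s) := hcomm.symm.sub_right (Commute.refl s)
  simpa using genEigenspace_inf_le_add s (f - s) c 0 ⊤ ⊤ hsn ⟨hs, hn⟩

theorem IsSemisimple.baseChange {K L V : Type*} [Field K] [PerfectField K] [Field L]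
    [Algebra K L] [AddCommGroup V] [Module K V] [FiniteDimensional K V] {f : End K V}
    (hf : f.IsSemisimple) : End.IsSemisimple (f.baseChange L) := by
  have hsep : (minpoly K f).Separable :=
    PerfectField.separable_iff_squarefree.mpr hf.minpoly_squarefree
  refine isSemisimple_of_squarefree_aeval_eq_zero (hsep.map (f := algebraMap K L)).squarefree ?_
  rw [Polynomial.aeval_map_algebraMap, show f.baseChange L = baseChangeHom K L V f from rfl,
    Polynomial.aeval_algHom_apply, minpoly.aeval, map_zero]

theorem baseChange_apply_eq_smul_iff {K L V : Type*} [Field K] [PerfectField K] [Field L]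
    [Algebra K L] [AddCommGroup V] [Module K V] [FiniteDimensional K V] {f s : End K V}
    (hs : s.IsSemisimple) (hnil : IsNilpotent (f - s)) (hcomm : Commute s (f - s)) {c : L}
    {v : L ⊗[K] V} : s.baseChange L v = c • v ↔ v ∈ maxGenEigenspace (f.baseChange L) c := by
  have hfs : Commute f s := by simpa using (hcomm.add_right (Commute.refl s)).symm
  refine apply_eq_smul_iff_mem_maxGenEigenspace hs.baseChange.isFinitelySemisimple
    (hfs.map (baseChangeHom K L V)) ?_
  have hnil' := hnil.map (baseChangeHom K L V)
  rw [map_sub] at hnil'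
  exact hnil'

end Module.End

theorem LinearMap.trace_restrict_eq_finrank_mul {K V : Type*} [Field K] [AddCommGroup V]
    [Module K V] [FiniteDimensional K V] {f : End K V} {W : Submodule K V} {c : K}
    (hW : W ≤ f.maxGenEigenspace c) (hf : Set.MapsTo f W W) :
    trace K W (f.restrict hf) = finrank K W * c := by
  have hc : Set.MapsTo (c • 1 : End K V) W W := fun _ hm => W.smul_mem c hm
  have hnil : IsNilpotent ((f - c • 1).restrict fun _ hm => W.sub_mem (hf hm) (hc hm)) :=
    End.isNilpotent_restrict_of_le hW
      (by simpa [Algebra.algebraMap_eq_smul_one] using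
        f.isNilpotent_restrict_maxGenEigenspace_sub_algebraMap c)
  rw [← sub_add_cancel (f.restrict hf) ((c • 1 : End K V).restrict hc), LinearMap.restrict_sub,
    map_add, (isNilpotent_trace_of_isNilpotent hnil).eq_zero, LinearMap.restrict_smul_one,
    map_smul, LinearMap.trace_one, smul_eq_mul, zero_add, mul_comm]

theorem LinearMap.baseChange_lie_of_leibniz {R A L : Type*} [CommRing R] [CommRing A]
    [Algebra R A] [LieRing L] [LieAlgebra R L] {D : L →ₗ[R] L}
    (hD : ∀ a b : L, D ⁅a, b⁆ = ⁅D a, b⁆ + ⁅a, D b⁆) (u v : A ⊗[R] L) :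
    D.baseChange A ⁅u, v⁆ = ⁅D.baseChange A u, v⁆ + ⁅u, D.baseChange A v⁆ := by
  induction u using TensorProduct.induction_on with
  | zero => simp
  | add u₁ u₂ h₁ h₂ => simp only [add_lie, map_add, h₁, h₂]; abel
  | tmul x a =>
    induction v using TensorProduct.induction_on with
    | zero => simp
    | add v₁ v₂ h₁ h₂ => simp only [lie_add, map_add, h₁, h₂]; abel
    | tmul y b =>
      simp only [LieAlgebra.ExtendScalars.bracket_tmul, LinearMap.baseChange_tmul, hD, tmul_add]

theorem RingHom.ad_pow_map {R S E F : Type*} [CommRing R] [CommRing S] [Ring E] [Ring F]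
    [Algebra R E] [Algebra S F] (φ : E →+* F) (x y : E) (n : ℕ) :
    (LieAlgebra.ad S F (φ x) ^ n) (φ y) = φ ((LieAlgebra.ad R E x ^ n) y) := by
  induction n with
  | zero => rfl
  | succ n ih =>
    simp only [pow_succ', Module.End.mul_apply, ih, LieAlgebra.ad_apply, Ring.lie_def, map_sub,
      map_mul]

namespace LieSubalgebra

theorem exists_ad_pow_apply_eq_zero {R L : Type*} [CommRing R] [LieRing L] [LieAlgebra R L]
    (H : LieSubalgebra R L) [LieRing.IsNilpotent H] {x y : L} (hx : x ∈ H) (hy : y ∈ H) :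
    ∃ n, (LieAlgebra.ad R L x ^ n) y = 0 := by
  obtain ⟨n, hn⟩ := LieAlgebra.nilpotent_ad_of_nilpotent_algebra R H
  exact ⟨n, by simpa [hn] using (LieSubalgebra.coe_ad_pow R L H ⟨x, hx⟩ ⟨y, hy⟩ n).symm⟩

theorem mapsTo_baseChange_maxGenEigenspace {K A V : Type*} [CommRing K] [CommRing A]
    [Algebra K A] [AddCommGroup V] [Module K V] (H : LieSubalgebra K (End K V))
    [LieRing.IsNilpotent H] {f g : End K V} (hf : f ∈ H) (hg : g ∈ H) (c : A) :
    Set.MapsTo (g.baseChange A) (End.maxGenEigenspace (f.baseChange A) c)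
      (End.maxGenEigenspace (f.baseChange A) c) := by
  obtain ⟨n, hn⟩ := H.exists_ad_pow_apply_eq_zero hf hg
  refine End.mapsTo_maxGenEigenspace_of_ad_pow_eq_zero (n := n) ?_ c
  have hpow := RingHom.ad_pow_map (R := K) (S := A)
    (End.baseChangeHom K A V : End K V →+* End A (A ⊗[K] V)) f g n
  rw [hn, map_zero] at hpow
  exact hpow

end LieSubalgebra

namespace Module.End

variable {ι K V : Type*} [Field K] [AddCommGroup V] [Module K V] [FiniteDimensional K V]
  (f : ι → End K V)

theorem hasEigenvalue_of_iInf_maxGenEigenspace_ne_bot {χ : ι → K}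
    (hχ : ⨅ i, (f i).maxGenEigenspace (χ i) ≠ ⊥) (i : ι) : (f i).HasEigenvalue (χ i) := by
  have h : (f i).maxGenEigenspace (χ i) ≠ ⊥ := fun hb => hχ (le_bot_iff.mp (hb ▸ iInf_le _ i))
  rw [maxGenEigenspace_eq_genEigenspace_finrank] at h
  exact hasEigenvalue_of_hasGenEigenvalue h

theorem exists_iInf_maxGenEigenspace_ne_bot_of_hasEigenvalue [IsAlgClosed K]
    (hf : ∀ i j c, Set.MapsTo (f i) ((f j).maxGenEigenspace c) ((f j).maxGenEigenspace c))
    {i : ι} {μ : K} (hμ : (f i).HasEigenvalue μ) :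
    ∃ χ : ι → K, ⨅ j, (f j).maxGenEigenspace (χ j) ≠ ⊥ ∧ χ i = μ := by
  by_contra! hne
  have hle : ⊤ ≤ ⨆ (ν : K) (_ : ν ≠ μ), (f i).maxGenEigenspace ν := by
    rw [← iSup_iInf_maxGenEigenspace_eq_top_of_forall_mapsTo f hf
      fun j => iSup_maxGenEigenspace_eq_top (f j)]
    refine iSup_le fun χ => ?_
    rcases eq_or_ne (⨅ j, (f j).maxGenEigenspace (χ j)) ⊥ with hb | hb
    · exact hb ▸ bot_le
    · exact (iInf_le _ i).trans (le_iSup₂_of_le (χ i) (hne χ hb) le_rfl)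
  have hbot : (f i).maxGenEigenspace μ = ⊥ :=
    ((f i).independent_maxGenEigenspace μ).eq_bot_of_le (le_top.trans hle)
  obtain ⟨v, hv, hv0⟩ := hμ.exists_hasEigenvector
  exact hv0 <| (Submodule.mem_bot K).mp <| hbot ▸ (f i).eigenspace_le_maxGenEigenspace hv

theorem exists_iInf_maxGenEigenspace_ne_bot_forall_le [IsAlgClosed K] {β : Type*} [LinearOrder β]
    (φ : K → β)
    (hf : ∀ i j c, Set.MapsTo (f i) ((f j).maxGenEigenspace c) ((f j).maxGenEigenspace c))
    {i : ι} {μ : K} (hμ : (f i).HasEigenvalue μ) :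
    ∃ χ : ι → K, ⨅ j, (f j).maxGenEigenspace (χ j) ≠ ⊥ ∧ φ μ ≤ φ (χ i) ∧
      ∀ χ' : ι → K, ⨅ j, (f j).maxGenEigenspace (χ' j) ≠ ⊥ → φ (χ' i) ≤ φ (χ i) := by
  set T := (fun χ : ι → K => χ i) '' {χ | ⨅ j, (f j).maxGenEigenspace (χ j) ≠ ⊥}
  have hT : T.Finite := (f i).finite_hasEigenvalue.subset <| by
    rintro _ ⟨χ, hχ, rfl⟩
    exact hasEigenvalue_of_iInf_maxGenEigenspace_ne_bot f hχ i
  obtain ⟨χμ, hχμ, hχμi⟩ := exists_iInf_maxGenEigenspace_ne_bot_of_hasEigenvalue f hf hμ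
  obtain ⟨_, ⟨χ, hχ, rfl⟩, hmax⟩ := Set.exists_max_image T φ hT ⟨μ, χμ, hχμ, hχμi⟩
  exact ⟨χ, hχ, hmax μ ⟨χμ, hχμ, hχμi⟩, fun χ' hχ' => hmax _ ⟨χ', hχ', rfl⟩⟩

end Module.End

section Weights

variable {R K V L : Type*} [CommRing R] [Field K] [Algebra R K] [AddCommGroup V] [Module K V]
  [Module R V] [IsScalarTower R K V] [LieRing L] [LieAlgebra R L]

def LieHom.restrictEnd (A : L →ₗ⁅R⁆ End K V) (W : Submodule K V)
    (hW : ∀ x, Set.MapsTo (A x) W W) : L →ₗ⁅R⁆ End K W where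
  toFun x := (A x).restrict (hW x)
  map_add' x y := by ext; simp only [map_add]; rfl
  map_smul' r x := by ext; simp only [map_smul]; rfl
  map_lie' {x y} := by ext; simp only [LieHom.map_lie, Ring.lie_def]; rfl

/-- `α x = trace (A x |_W) / dim W` on the joint generalized eigenspace `W`. -/
theorem exists_linearMap_eq_of_iInf_maxGenEigenspace_ne_bot [CharZero K] [FiniteDimensional K V]
    (A : L →ₗ⁅R⁆ End K V)
    (hA : ∀ x y c, Set.MapsTo (A x) ((A y).maxGenEigenspace c) ((A y).maxGenEigenspace c))
    {χ : L → K} (hχ : ⨅ x, (A x).maxGenEigenspace (χ x) ≠ ⊥) :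
    ∃ α : L →ₗ[R] K, ⇑α = χ ∧ ∀ x y : L, α ⁅x, y⁆ = 0 := by
  set W := ⨅ x, (A x).maxGenEigenspace (χ x)
  have hW : ∀ x, Set.MapsTo (A x) W W := fun x m hm =>
    Submodule.mem_iInf _ |>.mpr fun y => hA x y (χ y) (Submodule.mem_iInf _ |>.mp hm y)
  have hd : (finrank K W : K) ≠ 0 := by
    have : Nontrivial W := Submodule.nontrivial_iff_ne_bot.mpr hχ
    exact_mod_cast finrank_pos.ne'
  let α : L →ₗ[R] K := (finrank K W : K)⁻¹ •
    ((LinearMap.trace K W).restrictScalars R ∘ₗ (A.restrictEnd W hW).toLinearMap)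
  have hα : ⇑α = χ := funext fun x => by
    have hWx : W ≤ (A x).maxGenEigenspace (χ x) := iInf_le _ x
    simp [α, LieHom.restrictEnd, LinearMap.trace_restrict_eq_finrank_mul hWx, hd]
  exact ⟨α, hα, fun x y => by simp [α, LinearMap.trace_lie]⟩

end Weights

theorem lie_mem_iInf_maxGenEigenspace_add {ι K V : Type*} [CommRing K] [LieRing V]
    [LieAlgebra K V] {D : ι → End K V} (hD : ∀ i a b, D i ⁅a, b⁆ = ⁅D i a, b⁆ + ⁅a, D i b⁆)
    {χ₁ χ₂ : ι → K} {u v : V} (hu : u ∈ ⨅ i, (D i).maxGenEigenspace (χ₁ i))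
    (hv : v ∈ ⨅ i, (D i).maxGenEigenspace (χ₂ i)) :
    ⁅u, v⁆ ∈ ⨅ i, (D i).maxGenEigenspace (χ₁ i + χ₂ i) :=
  Submodule.mem_iInf _ |>.mpr fun i =>
    End.apply_mem_maxGenEigenspace_add_of_leibniz (LieAlgebra.ad K V : V →ₗ[K] _)
      (f := D i) (hD i) (Submodule.mem_iInf _ |>.mp hu i) (Submodule.mem_iInf _ |>.mp hv i)

theorem lie_eq_zero_of_forall_abs_re_le {ι V : Type*} [LieRing V] [LieAlgebra ℂ V]
    {D : ι → End ℂ V} (hD : ∀ i a b, D i ⁅a, b⁆ = ⁅D i a, b⁆ + ⁅a, D i b⁆) {χ : ι → ℂ} {i : ι}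
    (hre : (χ i).re ≠ 0)
    (hmax : ∀ χ' : ι → ℂ, ⨅ j, (D j).maxGenEigenspace (χ' j) ≠ ⊥ → |(χ' i).re| ≤ |(χ i).re|)
    {u v : V} (hu : u ∈ ⨅ j, (D j).maxGenEigenspace (χ j))
    (hv : v ∈ ⨅ j, (D j).maxGenEigenspace (starRingEnd ℂ (χ j))) : ⁅u, v⁆ = 0 := by
  by_contra huv
  have h := hmax _ <| (Submodule.ne_bot_iff _).mpr
    ⟨_, lie_mem_iInf_maxGenEigenspace_add hD hu hv, huv⟩
  rw [Complex.add_re, Complex.conj_re, ← two_mul, abs_mul, abs_two] at h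
  linarith [abs_pos.mpr hre]

theorem stmt14_general (g h : Type*) [LieRing g] [LieAlgebra ℝ g]
    [LieRing h] [LieAlgebra ℝ h] [FiniteDimensional ℝ h]
    (ρ : g →ₗ⁅ℝ⁆ Module.End ℝ h)
    (hder : ∀ (X : g) (a b : h), ρ X ⁅a, b⁆ = ⁅ρ X a, b⁆ + ⁅a, ρ X b⁆)
    (hnil : LieRing.IsNilpotent ρ.range)
    (ρs : g → Module.End ℝ h)
    (hss : ∀ X : g, (ρs X).IsSemisimple)
    (hn : ∀ X : g, IsNilpotent (ρ X - ρs X))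
    (hcomm : ∀ X : g, Commute (ρs X) (ρ X - ρs X))
    (hnotI : ∃ (X : g) (μ : ℂ), μ.re ≠ 0 ∧
      Module.End.HasEigenvalue (LinearMap.baseChange ℂ (ρ X)) μ) :
    ∃ α : g →ₗ[ℝ] ℂ, (∀ X Y : g, α ⁅X, Y⁆ = 0) ∧ (∃ X : g, (α X).re ≠ 0) ∧
      (∃ v : ℂ ⊗[ℝ] h, v ≠ 0 ∧ ∀ X : g, LinearMap.baseChange ℂ (ρs X) v = α X • v) ∧
      (∀ v w : ℂ ⊗[ℝ] h, (∀ X : g, LinearMap.baseChange ℂ (ρs X) v = α X • v) →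
        (∀ X : g, LinearMap.baseChange ℂ (ρs X) w = (starRingEnd ℂ) (α X) • w) →
        ⁅v, w⁆ = 0) := by
  obtain ⟨X₀, μ, hμre, hμ⟩ := hnotI
  let A : g →ₗ⁅ℝ⁆ End ℂ (ℂ ⊗[ℝ] h) := (End.baseChangeHom ℝ ℂ h).toLieHom.comp ρ
  have hA : ∀ X Y c, Set.MapsTo (A X) ((A Y).maxGenEigenspace c) ((A Y).maxGenEigenspace c) :=
    fun X Y c => ρ.range.mapsTo_baseChange_maxGenEigenspace ⟨Y, rfl⟩ ⟨X, rfl⟩ c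
  have hS : ∀ {c : g → ℂ} {v}, (∀ X, (ρs X).baseChange ℂ v = c X • v) ↔
      v ∈ ⨅ X, (A X).maxGenEigenspace (c X) := by
    intro c v
    simp only [Submodule.mem_iInf]
    exact forall_congr' fun X => End.baseChange_apply_eq_smul_iff (hss X) (hn X) (hcomm X)
  obtain ⟨χ, hχ, hμχ, hmax⟩ :=
    End.exists_iInf_maxGenEigenspace_ne_bot_forall_le (fun X => A X) (fun z => |z.re|) hA hμ
  obtain ⟨α, rfl, hαlie⟩ := exists_linearMap_eq_of_iInf_maxGenEigenspace_ne_bot A hA hχ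
  have hre : (α X₀).re ≠ 0 := abs_pos.mp ((abs_pos.mpr hμre).trans_le hμχ)
  obtain ⟨v₀, hv₀, hv₀_ne⟩ := Submodule.exists_mem_ne_zero_of_ne_bot hχ
  refine ⟨α, hαlie, ⟨X₀, hre⟩, ⟨v₀, hv₀_ne, hS.mpr hv₀⟩, fun v w hv hw => ?_⟩
  exact lie_eq_zero_of_forall_abs_re_le (fun X => (ρ X).baseChange_lie_of_leibniz (hder X))
    hre hmax (hS.mp hv) (hS.mp hw)

/-- Let `ρ : 𝔤 → Der(𝔥)` be a representation by derivations of a solvable Lie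
algebra with nilpotent image, not of type (I). Then there is a character `α` with
`Re α ≠ 0`, a nonzero weight vector for `α` in `𝔥_ℂ`, and
`[V_α(𝔥_ℂ), V_ᾱ(𝔥_ℂ)] = 0`. -/
theorem stmt14 (g h : Type*) [LieRing g] [LieAlgebra ℝ g] [LieAlgebra.IsSolvable g]
    [Module.Finite ℝ g] [LieRing h] [LieAlgebra ℝ h] [FiniteDimensional ℝ h]
    (ρ : g →ₗ⁅ℝ⁆ Module.End ℝ h)
    (hder : ∀ (X : g) (a b : h), ρ X ⁅a, b⁆ = ⁅ρ X a, b⁆ + ⁅a, ρ X b⁆)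
    (hnil : LieRing.IsNilpotent ρ.range)
    (ρs : g → Module.End ℝ h)
    (hss : ∀ X : g, (ρs X).IsSemisimple)
    (hn : ∀ X : g, IsNilpotent (ρ X - ρs X))
    (hcomm : ∀ X : g, Commute (ρs X) (ρ X - ρs X))
    (hnotI : ∃ (X : g) (μ : ℂ), μ.re ≠ 0 ∧
      Module.End.HasEigenvalue (LinearMap.baseChange ℂ (ρ X)) μ) :
    ∃ α : g →ₗ[ℝ] ℂ, (∀ X Y : g, α ⁅X, Y⁆ = 0) ∧ (∃ X : g, (α X).re ≠ 0) ∧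
      (∃ v : ℂ ⊗[ℝ] h, v ≠ 0 ∧ ∀ X : g, LinearMap.baseChange ℂ (ρs X) v = α X • v) ∧
      (∀ v w : ℂ ⊗[ℝ] h, (∀ X : g, LinearMap.baseChange ℂ (ρs X) v = α X • v) →
        (∀ X : g, LinearMap.baseChange ℂ (ρs X) w = (starRingEnd ℂ) (α X) • w) →
        ⁅v, w⁆ = 0) :=
  stmt14_general g h ρ hder hnil ρs hss hn hcomm hnotI
end
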